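/- arXiv:1808.07673 — 6 statements merged into one kernel-verified Lean document; each statement's English description precedes it below -/
import Mathlib

section
/- Let I ⊂ ℝ be a bounded measurable set, let k : ℝ → ℝ be bounded and measurable, let Φ, ψ : ℝ → ℝ be Lipschitz continuous, and fix x ∈ ℝ. Then the function g : ℝ → ℝ defined by g(t) = (1/π) ∫_I sin((Φ(x') + t·ψ(x')) − (Φ(x) + t·ψ(x))) · k(x'−x) / (x'−x) dx' is differentiable at t = 0 with derivative g'(0) = (1/π) ∫_I cos(Φ(x') − Φ(x)) · k(x'−x) · (ψ(x') − ψ(x)) / (x'−x) dx'. -/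
/-!
Writing `A = Φ - Φ x`, `B = ψ - ψ x` and `c(x') = k(x' - x) / (x' - x)`, the integrand is
`sin (A + t B) · c`, whose `t`-derivative `cos (A + t B) · B · c` is bounded uniformly in `t`
because the Lipschitz difference quotient `B / (x' - x)` is bounded and `k` is bounded. As `I` is
bounded the restricted measure is finite, so differentiation under the integral sign applies.
-/

open MeasureTheory Real Filter Set

namespace LipschitzWith

variable {K : NNReal} {f : ℝ → ℝ}

/-- At `a = b` the quotient is `0 / 0 = 0`, so no case split is needed. -/
theorem abs_sub_div_sub_le (hf : LipschitzWith K f) (a b : ℝ) :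
    |(f a - f b) / (a - b)| ≤ K := by
  rw [abs_div]
  refine div_le_of_le_mul₀ (abs_nonneg _) K.coe_nonneg ?_
  simpa only [Real.dist_eq] using hf.dist_le_mul a b

theorem abs_sin_sub_div_sub_le (hf : LipschitzWith K f) (a b : ℝ) :
    |sin (f a - f b) / (a - b)| ≤ K :=
  calc |sin (f a - f b) / (a - b)| ≤ |(f a - f b) / (a - b)| := by
        rw [abs_div, abs_div]
        exact div_le_div_of_nonneg_right abs_sin_le_abs (abs_nonneg _)
    _ ≤ K := hf.abs_sub_div_sub_le a b

end LipschitzWith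

theorem abs_mul_div_le_of_abs_div_le {u v d K M : ℝ} (hu : |u / d| ≤ K) (hv : |v| ≤ M)
    (hK : 0 ≤ K) : |u * (v / d)| ≤ K * M := by
  rw [← mul_div_assoc, mul_div_right_comm, abs_mul]
  exact mul_le_mul hu hv (abs_nonneg _) hK

theorem hasDerivAt_integral_sin_add_mul {α : Type*} [MeasurableSpace α] {μ : Measure α}
    [IsFiniteMeasure μ] {A B c : α → ℝ} (hA : AEStronglyMeasurable A μ)
    (hB : AEStronglyMeasurable B μ) (hc : AEStronglyMeasurable c μ) {C : ℝ}
    (hBc : ∀ᵐ a ∂μ, |B a * c a| ≤ C) (hint : Integrable (fun a => sin (A a) * c a) μ) :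
    HasDerivAt (fun t => ∫ a, sin (A a + t * B a) * c a ∂μ)
      (∫ a, cos (A a) * B a * c a ∂μ) 0 := by
  have hmeas : ∀ t : ℝ, AEStronglyMeasurable (fun a => sin (A a + t * B a) * c a) μ := fun t =>
    (continuous_sin.comp_aestronglyMeasurable (hA.add (hB.const_mul t))).mul hc
  have hderiv_meas : AEStronglyMeasurable (fun a => cos (A a + 0 * B a) * B a * c a) μ :=
    ((continuous_cos.comp_aestronglyMeasurable (hA.add (hB.const_mul 0))).mul hB).mul hc
  have hderiv_le : ∀ᵐ a ∂μ, ∀ t ∈ univ, ‖cos (A a + t * B a) * B a * c a‖ ≤ C := by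
    filter_upwards [hBc] with a ha t _
    calc ‖cos (A a + t * B a) * B a * c a‖ = |cos (A a + t * B a)| * |B a * c a| := by
          rw [Real.norm_eq_abs, mul_assoc, abs_mul]
      _ ≤ 1 * C := mul_le_mul (abs_cos_le_one _) ha (abs_nonneg _) zero_le_one
      _ = C := one_mul C
  have hderiv : ∀ᵐ a ∂μ, ∀ t ∈ univ,
      HasDerivAt (fun t => sin (A a + t * B a) * c a) (cos (A a + t * B a) * B a * c a) t := by
    refine Eventually.of_forall fun a t _ => ?_
    simpa using ((((hasDerivAt_id t).mul_const (B a)).const_add (A a)).sin).mul_const (c a)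
  simpa using (hasDerivAt_integral_of_dominated_loc_of_deriv_le univ_mem
    (Eventually.of_forall hmeas) (by simpa using hint) hderiv_meas hderiv_le
    (integrable_const C) hderiv).2

theorem stmt_0_general (I : Set ℝ) (hIbd : Bornology.IsBounded I)
    (k : ℝ → ℝ) (hkm : Measurable k) (M : ℝ) (hkM : ∀ u, |k u| ≤ M)
    (Φ ψ : ℝ → ℝ) (LΦ Lψ : NNReal) (hΦ : LipschitzWith LΦ Φ) (hψ : LipschitzWith Lψ ψ)
    (x : ℝ) :
    HasDerivAt
      (fun t : ℝ => (1 / Real.pi) * ∫ x' in I,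
        Real.sin ((Φ x' + t * ψ x') - (Φ x + t * ψ x)) * k (x' - x) / (x' - x))
      ((1 / Real.pi) * ∫ x' in I,
        Real.cos (Φ x' - Φ x) * k (x' - x) * (ψ x' - ψ x) / (x' - x))
      0 := by
  have : IsFiniteMeasure (volume.restrict I) :=
    isFiniteMeasure_restrict.mpr (hIbd.measure_lt_top (μ := volume)).ne
  have hc : Measurable fun x' => k (x' - x) / (x' - x) :=
    (hkm.comp (measurable_id.sub_const x)).div (measurable_id.sub_const x)
  have hψc : ∀ x', |(ψ x' - ψ x) * (k (x' - x) / (x' - x))| ≤ Lψ * M := fun x' =>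
    abs_mul_div_le_of_abs_div_le (hψ.abs_sub_div_sub_le x' x) (hkM _) Lψ.coe_nonneg
  have hΦc : ∀ x', ‖sin (Φ x' - Φ x) * (k (x' - x) / (x' - x))‖ ≤ LΦ * M := fun x' =>
    abs_mul_div_le_of_abs_div_le (hΦ.abs_sin_sub_div_sub_le x' x) (hkM _) LΦ.coe_nonneg
  have hint : Integrable (fun x' => sin (Φ x' - Φ x) * (k (x' - x) / (x' - x)))
      (volume.restrict I) :=
    .of_bound ((continuous_sin.comp (hΦ.continuous.sub continuous_const)).aestronglyMeasurable.mul
      hc.aestronglyMeasurable) _ (Eventually.of_forall hΦc)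
  have hF : ∀ t x', sin ((Φ x' + t * ψ x') - (Φ x + t * ψ x)) * k (x' - x) / (x' - x) =
      sin ((Φ x' - Φ x) + t * (ψ x' - ψ x)) * (k (x' - x) / (x' - x)) := fun t x' => by
    rw [mul_div_assoc]
    congr 2
    ring
  have hF' : ∀ x', cos (Φ x' - Φ x) * k (x' - x) * (ψ x' - ψ x) / (x' - x) =
      cos (Φ x' - Φ x) * (ψ x' - ψ x) * (k (x' - x) / (x' - x)) := fun _ => by
    ring
  simp only [hF, hF']
  exact (hasDerivAt_integral_sin_add_mul (A := fun x' => Φ x' - Φ x)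
    (B := fun x' => ψ x' - ψ x) (hΦ.continuous.sub continuous_const).aestronglyMeasurable
    (hψ.continuous.sub continuous_const).aestronglyMeasurable hc.aestronglyMeasurable
    (Eventually.of_forall hψc) hint).const_mul (1 / π)

/-- One-dimensional core of the Fréchet derivative of the roof wavefront sensor operator:
differentiability at `t = 0` of the sensor response along the direction `ψ`. -/
theorem stmt_0 (I : Set ℝ) (hIbd : Bornology.IsBounded I) (hIm : MeasurableSet I)
    (k : ℝ → ℝ) (hkm : Measurable k) (M : ℝ) (hkM : ∀ u, |k u| ≤ M)
    (Φ ψ : ℝ → ℝ) (LΦ Lψ : NNReal) (hΦ : LipschitzWith LΦ Φ) (hψ : LipschitzWith Lψ ψ)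
    (x : ℝ) :
    HasDerivAt
      (fun t : ℝ => (1 / Real.pi) * ∫ x' in I,
        Real.sin ((Φ x' + t * ψ x') - (Φ x + t * ψ x)) * k (x' - x) / (x' - x))
      ((1 / Real.pi) * ∫ x' in I,
        Real.cos (Φ x' - Φ x) * k (x' - x) * (ψ x' - ψ x) / (x' - x))
      0 :=
  stmt_0_general I hIbd k hkm M hkM Φ ψ LΦ Lψ hΦ hψ x
end

section
/- Let I = [a,b] be a compact interval, let Φ, ψ, φ : ℝ → ℝ be Lipschitz continuous, and let k : ℝ → ℝ be Lipschitz continuous and even (k(−u) = k(u) for all u). Then ∫_I [ (1/π) ∫_I cos(Φ(x') − Φ(x)) · k(x'−x) · (ψ(x') − ψ(x)) / (x'−x) dx' ] · φ(x) dx = − ∫_I ψ(x) · [ lim_{ε→0⁺} (1/π) ∫_{I \ (x−ε,x+ε)} cos(Φ(x') − Φ(x)) · k(x'−x) · (φ(x') + φ(x)) / (x'−x) dx' ] dx, where the inner limit on the right-hand side exists for every x ∈ (a,b). -/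
/-!
Write `c x x' = cos (Φ x' - Φ x) * k (x' - x)`; it is symmetric and `|c x x' - k 0| ≲ |x' - x|`.
Both sides equal `(1/2π) ∬_{I×I} c x x' (ψ x' - ψ x) (φ x' + φ x) / (x' - x)`, a bounded
integrand since `ψ` is Lipschitz. For the left side this is the average of the double integral
and its image under `(x, x') ↦ (x', x)`. For the right side the same swap argument applies to the
truncated operator, whose integrand is bounded on `{ε ≤ |x' - x|}`, and one lets `ε → 0` by
dominated convergence on both sides. The principal value exists because subtracting
`2 k(0) φ(x) / (x' - x)` leaves a bounded integrand, while
`∫_{I \ (x-ε, x+ε)} dx' / (x' - x) = log (b - x) - log (x - a)` once `ε < dist x {a, b}`;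
the logarithms are integrable in `x`, which gives the dominating function.
-/

open MeasureTheory Real Filter Set Topology
open scoped NNReal

lemma ae_snd_ne_fst {α : Type*} [MeasurableSpace α] [MeasurableEq α] {μ : Measure α} [SFinite μ]
    [NullSingletonClass μ] : ∀ᵐ p ∂(μ.prod μ), p.2 ≠ p.1 :=
  (Measure.ae_prod_iff_ae_ae (measurableSet_diagonal.preimage measurable_swap).compl).mpr <|
    .of_forall fun x => μ.ae_ne x

lemma tendsto_setIntegral_of_ae_eventually_mem {α ι E : Type*} [MeasurableSpace α]
    [NormedAddCommGroup E] [NormedSpace ℝ E] {μ : Measure α} {l : Filter ι}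
    [l.IsCountablyGenerated] {s : ι → Set α} {f : α → E} (hs : ∀ i, MeasurableSet (s i))
    (hf : Integrable f μ) (h : ∀ᵐ y ∂μ, ∀ᶠ i in l, y ∈ s i) :
    Tendsto (fun i => ∫ y in s i, f y ∂μ) l (𝓝 (∫ y, f y ∂μ)) := by
  simp_rw [← integral_indicator (hs _)]
  refine tendsto_integral_filter_of_dominated_convergence (fun y => ‖f y‖)
    (.of_forall fun i => hf.aestronglyMeasurable.indicator (hs i))
    (.of_forall fun i => .of_forall fun y => norm_indicator_le_norm_self _ _) hf.norm ?_
  filter_upwards [h] with y hy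
  exact tendsto_const_nhds.congr' (hy.mono fun i hi => (indicator_of_mem hi f).symm)

lemma integral_prod_self_eq_half_integral_add_swap {α : Type*} [MeasurableSpace α]
    {μ : Measure α} [SFinite μ] {f : α × α → ℝ} (hf : Integrable f (μ.prod μ)) :
    ∫ p, f p ∂(μ.prod μ) = (∫ p, (f p + f p.swap) ∂(μ.prod μ)) / 2 := by
  rw [integral_add hf (hf.swap : Integrable (fun p => f p.swap) _), integral_prod_swap]
  ring

lemma integrable_prod_Icc_of_abs_le {a b M : ℝ} {f : ℝ × ℝ → ℝ}
    (hf : AEStronglyMeasurable f ((volume.restrict (Icc a b)).prod (volume.restrict (Icc a b))))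
    (hM : ∀ x ∈ Icc a b, ∀ x' ∈ Icc a b, |f (x, x')| ≤ M) :
    Integrable f ((volume.restrict (Icc a b)).prod (volume.restrict (Icc a b))) := by
  refine .of_bound hf M ?_
  rw [Measure.prod_restrict]
  filter_upwards [ae_restrict_mem (measurableSet_Icc.prod measurableSet_Icc)] with p hp
  exact hM p.1 hp.1 p.2 hp.2

lemma abs_div_le_of_abs_le_mul {n d C : ℝ} (hC : 0 ≤ C) (h : |n| ≤ C * |d|) : |n / d| ≤ C := by
  rcases eq_or_ne d 0 with rfl | hd
  · simpa using hC
  · rwa [abs_div, div_le_iff₀ (abs_pos.mpr hd)]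

lemma LipschitzWith.abs_sub_le {L : ℝ≥0} {f : ℝ → ℝ} (hf : LipschitzWith L f) (x y : ℝ) :
    |f x - f y| ≤ L * |x - y| := by
  simpa only [Real.norm_eq_abs] using hf.norm_sub_le x y

lemma Continuous.exists_abs_le_on_Icc {f : ℝ → ℝ} (hf : Continuous f) (a b : ℝ) :
    ∃ B ≥ 0, ∀ x ∈ Icc a b, |f x| ≤ B := by
  obtain ⟨B, hB⟩ := (isCompact_Icc (a := a) (b := b)).exists_bound_of_continuousOn hf.continuousOn
  exact ⟨max B 0, le_max_right _ _, fun x hx => (hB x hx).trans (le_max_left _ _)⟩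

lemma mem_Ioo_sub_add_iff {x y ε : ℝ} : y ∈ Ioo (x - ε) (x + ε) ↔ |y - x| < ε := by
  rw [← Real.ball_eq_Ioo, Metric.mem_ball, Real.dist_eq]

lemma Icc_diff_Ioo_eq_inter (a b x ε : ℝ) :
    Icc a b \ Ioo (x - ε) (x + ε) = {x' | ε ≤ |x' - x|} ∩ Icc a b := by
  ext x'
  rw [Set.mem_sdiff, mem_inter_iff, mem_ofPred_eq, mem_Ioo_sub_add_iff, not_lt, and_comm]

lemma Icc_diff_Ioo_eq_union {a b x ε : ℝ} (hx : x ∈ Icc a b) (hε : 0 < ε) :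
    Icc a b \ Ioo (x - ε) (x + ε) = Icc a (x - ε) ∪ Icc (x + ε) b := by
  ext t
  simp only [Set.mem_sdiff, mem_Icc, mem_Ioo, mem_union]
  grind

lemma integrableOn_log_sub_left (a b : ℝ) : IntegrableOn (fun x => log (x - a)) (Icc a b) := by
  rcases le_or_gt a b with hab | hba
  · refine (intervalIntegrable_iff_integrableOn_Icc_of_le hab).mp ?_
    simpa using (intervalIntegral.intervalIntegrable_log' (a := 0) (b := b - a)).comp_sub_right a
  · simp [Icc_eq_empty_of_lt hba]

lemma integrableOn_log_sub_right (a b : ℝ) : IntegrableOn (fun x => log (b - x)) (Icc a b) := by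
  rcases le_or_gt a b with hab | hba
  · refine (intervalIntegrable_iff_integrableOn_Icc_of_le hab).mp ?_
    simpa using (intervalIntegral.intervalIntegrable_log' (a := b - a) (b := 0)).comp_sub_left b
  · simp [Icc_eq_empty_of_lt hba]

lemma integrableOn_inv_sub_Icc_diff_Ioo (a b : ℝ) {x ε : ℝ} (hε : 0 < ε) :
    IntegrableOn (fun t => (t - x)⁻¹) (Icc a b \ Ioo (x - ε) (x + ε)) :=
  ContinuousOn.integrableOn_compact (isCompact_Icc.diff isOpen_Ioo) <|
    (continuousOn_id.sub continuousOn_const).inv₀ fun t ht h =>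
      ht.2 (mem_Ioo_sub_add_iff.mpr (by rwa [show t - x = 0 from h, abs_zero]))

lemma setIntegral_Icc_inv_sub {c d x : ℝ} (hcd : c ≤ d) (hx : x ∉ Icc c d) :
    ∫ t in Icc c d, (t - x)⁻¹ = log (d - x) - log (c - x) := by
  have h0 : (0 : ℝ) ∉ uIcc (c - x) (d - x) := by
    rw [uIcc_of_le (by linarith)]
    exact fun h => hx ⟨by linarith [h.1], by linarith [h.2]⟩
  have hc : c - x ≠ 0 := fun h => h0 (h ▸ left_mem_uIcc)
  have hd : d - x ≠ 0 := fun h => h0 (h ▸ right_mem_uIcc)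
  rw [integral_Icc_eq_integral_Ioc, ← intervalIntegral.integral_of_le hcd,
    intervalIntegral.integral_comp_sub_right (fun t => t⁻¹), integral_inv h0, log_div hd hc]

lemma setIntegral_Icc_add_inv_sub {x ε r : ℝ} (hε : 0 < ε) (hr : 0 < r) :
    ∫ t in Icc (x + ε) (x + r), (t - x)⁻¹ = max (log r) (log ε) - log ε := by
  rcases le_or_gt ε r with h | h
  · rw [setIntegral_Icc_inv_sub (by linarith) (fun h' => by linarith [h'.1]),
      max_eq_left (log_le_log hε h)]
    simp
  · rw [Icc_eq_empty (by linarith), max_eq_right (log_le_log hr h.le)]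
    simp

lemma setIntegral_Icc_sub_inv_sub {x ε r : ℝ} (hε : 0 < ε) (hr : 0 < r) :
    ∫ t in Icc (x - r) (x - ε), (t - x)⁻¹ = log ε - max (log r) (log ε) := by
  rcases le_or_gt ε r with h | h
  · rw [setIntegral_Icc_inv_sub (by linarith) (fun h' => by linarith [h'.2]),
      max_eq_left (log_le_log hε h)]
    simp
  · rw [Icc_eq_empty (by linarith), max_eq_right (log_le_log hr h.le)]
    simp

lemma setIntegral_Icc_diff_Ioo_inv_sub {a b x ε : ℝ} (hx : x ∈ Ioo a b) (hε : 0 < ε) :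
    ∫ t in Icc a b \ Ioo (x - ε) (x + ε), (t - x)⁻¹ =
      max (log (b - x)) (log ε) - max (log (x - a)) (log ε) := by
  have hint := integrableOn_inv_sub_Icc_diff_Ioo a b (x := x) hε
  rw [Icc_diff_Ioo_eq_union (Ioo_subset_Icc_self hx) hε] at hint ⊢
  rw [setIntegral_union (Set.disjoint_left.mpr fun t h h' => by linarith [h.2, h'.1])
    measurableSet_Icc (hint.mono_set subset_union_left) (hint.mono_set subset_union_right)]
  have hl := setIntegral_Icc_sub_inv_sub (x := x) hε (sub_pos.mpr hx.1)
  have hr := setIntegral_Icc_add_inv_sub (x := x) hε (sub_pos.mpr hx.2)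
  rw [sub_sub_cancel] at hl
  rw [add_sub_cancel] at hr
  linarith

structure IsSymmDiagLipschitzKernel (a b κ : ℝ) (c : ℝ → ℝ → ℝ) : Prop where
  measurable : Measurable fun p : ℝ × ℝ => c p.1 p.2
  symm : ∀ x x', c x' x = c x x'
  lipschitz_diag : ∃ C ≥ 0, ∀ x ∈ Icc a b, ∀ x' ∈ Icc a b, |c x x' - κ| ≤ C * |x' - x|

lemma isSymmDiagLipschitzKernel_cos_mul {Φ k : ℝ → ℝ} {LΦ Lk : ℝ≥0} (hΦ : LipschitzWith LΦ Φ)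
    (hk : LipschitzWith Lk k) (hke : ∀ u, k (-u) = k u) (a b : ℝ) :
    IsSymmDiagLipschitzKernel a b (k 0) fun x x' => cos (Φ x' - Φ x) * k (x' - x) where
  measurable := by
    have := hΦ.continuous; have := hk.continuous
    fun_prop
  symm x x' := by rw [← neg_sub, cos_neg, ← neg_sub x, hke]
  lipschitz_diag := by
    refine ⟨LΦ * (|k 0| + Lk * |b - a|) + Lk, by positivity, fun x hx x' hx' => ?_⟩
    have hu : |x' - x| ≤ |b - a| :=
      (abs_sub_le_of_le_of_le hx'.1 hx'.2 hx.1 hx.2).trans (le_abs_self _)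
    have hk0 : |k (x' - x) - k 0| ≤ Lk * |x' - x| := by
      simpa using hk.abs_sub_le (x' - x) 0
    have hku : |k (x' - x)| ≤ |k 0| + Lk * |b - a| := by
      have := abs_sub_abs_le_abs_sub (k (x' - x)) (k 0)
      nlinarith [Lk.coe_nonneg]
    have hcos : |cos (Φ x' - Φ x) - 1| ≤ LΦ * |x' - x| := by
      have := abs_cos_sub_cos_le (Φ x' - Φ x) 0
      rw [sub_zero, cos_zero] at this
      exact this.trans (hΦ.abs_sub_le x' x)
    calc |cos (Φ x' - Φ x) * k (x' - x) - k 0|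
        = |(cos (Φ x' - Φ x) - 1) * k (x' - x) + (k (x' - x) - k 0)| := by ring_nf
      _ ≤ LΦ * |x' - x| * (|k 0| + Lk * |b - a|) + Lk * |x' - x| := by
        grw [abs_add_le, abs_mul, hcos, hku, hk0]
      _ = _ := by ring

noncomputable def pvKernel (κ : ℝ) (c : ℝ → ℝ → ℝ) (φ : ℝ → ℝ) (x x' : ℝ) : ℝ :=
  (c x x' * (φ x' + φ x) - 2 * κ * φ x) / (x' - x)

noncomputable def truncAdjoint (a b : ℝ) (c : ℝ → ℝ → ℝ) (φ : ℝ → ℝ) (ε x : ℝ) : ℝ :=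
  ∫ x' in Icc a b \ Ioo (x - ε) (x + ε), c x x' * (φ x' + φ x) / (x' - x)

noncomputable def pvAdjoint (a b κ : ℝ) (c : ℝ → ℝ → ℝ) (φ : ℝ → ℝ) (x : ℝ) : ℝ :=
  (∫ x' in Icc a b, pvKernel κ c φ x x') + 2 * κ * φ x * (log (b - x) - log (x - a))

noncomputable def symmKernel (c : ℝ → ℝ → ℝ) (ψ φ : ℝ → ℝ) (p : ℝ × ℝ) : ℝ :=
  c p.1 p.2 * (ψ p.2 - ψ p.1) / (p.2 - p.1) * (φ p.2 + φ p.1)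

noncomputable def truncAdjointIntegrand (c : ℝ → ℝ → ℝ) (ψ φ : ℝ → ℝ) (ε : ℝ) (p : ℝ × ℝ) : ℝ :=
  if ε ≤ |p.2 - p.1| then ψ p.1 * (c p.1 p.2 * (φ p.2 + φ p.1) / (p.2 - p.1)) else 0

lemma mul_truncAdjoint_eq_integral (a b : ℝ) (c : ℝ → ℝ → ℝ) (ψ φ : ℝ → ℝ) (ε x : ℝ) :
    ψ x * truncAdjoint a b c φ ε x =
      ∫ x', truncAdjointIntegrand c ψ φ ε (x, x') ∂(volume.restrict (Icc a b)) := by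
  have hmeas : MeasurableSet {x' : ℝ | ε ≤ |x' - x|} :=
    measurableSet_le measurable_const (by fun_prop)
  rw [truncAdjoint, ← integral_const_mul, Icc_diff_Ioo_eq_inter, ← Measure.restrict_restrict hmeas,
    ← integral_indicator hmeas]
  rfl

lemma truncAdjointIntegrand_add_swap {c : ℝ → ℝ → ℝ} (hc : ∀ x x', c x' x = c x x')
    (ψ φ : ℝ → ℝ) (ε : ℝ) (p : ℝ × ℝ) :
    truncAdjointIntegrand c ψ φ ε p + truncAdjointIntegrand c ψ φ ε p.swap =
      -{p : ℝ × ℝ | ε ≤ |p.2 - p.1|}.indicator (symmKernel c ψ φ) p := by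
  obtain ⟨x, x'⟩ := p
  simp only [truncAdjointIntegrand, symmKernel, Prod.swap, indicator_apply, mem_ofPred_eq,
    abs_sub_comm x x']
  split_ifs
  · rw [hc, ← neg_sub x' x, div_neg]
    ring
  · simp

lemma symmKernel_eq_add_swap {c : ℝ → ℝ → ℝ} (hc : ∀ x x', c x' x = c x x') (ψ φ : ℝ → ℝ)
    (p : ℝ × ℝ) : symmKernel c ψ φ p =
      c p.1 p.2 * (ψ p.2 - ψ p.1) / (p.2 - p.1) * φ p.1 +
        c p.2 p.1 * (ψ p.1 - ψ p.2) / (p.1 - p.2) * φ p.2 := by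
  obtain ⟨x, x'⟩ := p
  simp only [symmKernel]
  rw [hc, ← neg_sub x' x, div_neg]
  ring

namespace IsSymmDiagLipschitzKernel

variable {a b κ : ℝ} {c : ℝ → ℝ → ℝ} {ψ φ : ℝ → ℝ} {Lψ Lφ : ℝ≥0}

lemma exists_abs_le (hc : IsSymmDiagLipschitzKernel a b κ c) :
    ∃ M ≥ 0, ∀ x ∈ Icc a b, ∀ x' ∈ Icc a b, |c x x'| ≤ M := by
  obtain ⟨C, hC, h⟩ := hc.lipschitz_diag
  refine ⟨|κ| + C * |b - a|, by positivity, fun x hx x' hx' => ?_⟩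
  calc |c x x'| ≤ |κ| + |c x x' - κ| := by linarith [abs_sub_abs_le_abs_sub (c x x') κ]
    _ ≤ |κ| + C * |b - a| := by
      grw [h x hx x' hx', abs_sub_le_of_le_of_le hx'.1 hx'.2 hx.1 hx.2, le_abs_self (b - a)]

lemma exists_abs_pvKernel_le (hc : IsSymmDiagLipschitzKernel a b κ c)
    (hφ : LipschitzWith Lφ φ) :
    ∃ M ≥ 0, ∀ x ∈ Icc a b, ∀ x' ∈ Icc a b, |pvKernel κ c φ x x'| ≤ M := by
  obtain ⟨C, hC, h⟩ := hc.lipschitz_diag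
  obtain ⟨B, hB, hφB⟩ := hφ.continuous.exists_abs_le_on_Icc a b
  refine ⟨C * (2 * B) + |κ| * Lφ, by positivity, fun x hx x' hx' =>
    abs_div_le_of_abs_le_mul (by positivity) ?_⟩
  calc |c x x' * (φ x' + φ x) - 2 * κ * φ x|
      = |(c x x' - κ) * (φ x' + φ x) + κ * (φ x' - φ x)| := by ring_nf
    _ ≤ C * |x' - x| * (B + B) + |κ| * (Lφ * |x' - x|) := by
      grw [abs_add_le, abs_mul, abs_mul, h x hx x' hx', abs_add_le, hφB x hx, hφB x' hx',
        hφ.abs_sub_le]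
    _ = _ := by ring

lemma exists_abs_diffQuot_le (hc : IsSymmDiagLipschitzKernel a b κ c)
    (hψ : LipschitzWith Lψ ψ) :
    ∃ M ≥ 0, ∀ x ∈ Icc a b, ∀ x' ∈ Icc a b, |c x x' * (ψ x' - ψ x) / (x' - x)| ≤ M := by
  obtain ⟨M, hM, h⟩ := hc.exists_abs_le
  refine ⟨M * Lψ, by positivity, fun x hx x' hx' =>
    abs_div_le_of_abs_le_mul (by positivity) ?_⟩
  grw [abs_mul, h x hx x' hx', hψ.abs_sub_le, mul_assoc]

lemma integrableOn_pvKernel (hc : IsSymmDiagLipschitzKernel a b κ c) (hφ : LipschitzWith Lφ φ)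
    {x : ℝ} (hx : x ∈ Icc a b) : IntegrableOn (pvKernel κ c φ x) (Icc a b) := by
  obtain ⟨M, -, hM⟩ := hc.exists_abs_pvKernel_le hφ
  have := hc.measurable.comp (measurable_prodMk_left (x := x))
  have := hφ.continuous.measurable
  refine .of_bound measure_Icc_lt_top
    (show Measurable fun x' => pvKernel κ c φ x x' by unfold pvKernel; fun_prop).aestronglyMeasurable
    M ?_
  filter_upwards [ae_restrict_mem measurableSet_Icc] with x' hx'
  exact hM x hx x' hx'

lemma truncAdjoint_eq (hc : IsSymmDiagLipschitzKernel a b κ c) (hφ : LipschitzWith Lφ φ)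
    {x ε : ℝ} (hx : x ∈ Ioo a b) (hε : 0 < ε) :
    truncAdjoint a b c φ ε x = (∫ x' in Icc a b \ Ioo (x - ε) (x + ε), pvKernel κ c φ x x') +
      2 * κ * φ x * (max (log (b - x)) (log ε) - max (log (x - a)) (log ε)) := by
  have hsplit : ∀ x', c x x' * (φ x' + φ x) / (x' - x) =
      pvKernel κ c φ x x' + 2 * κ * φ x * (x' - x)⁻¹ := fun x' => by unfold pvKernel; ring
  rw [truncAdjoint, funext hsplit, integral_add
    ((hc.integrableOn_pvKernel hφ (Ioo_subset_Icc_self hx)).mono_set sdiff_subset)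
    ((integrableOn_inv_sub_Icc_diff_Ioo a b hε).const_mul _), integral_const_mul,
    setIntegral_Icc_diff_Ioo_inv_sub hx hε]

lemma tendsto_truncAdjoint (hc : IsSymmDiagLipschitzKernel a b κ c) (hφ : LipschitzWith Lφ φ)
    {x : ℝ} (hx : x ∈ Ioo a b) :
    Tendsto (fun ε => truncAdjoint a b c φ ε x) (𝓝[>] 0) (𝓝 (pvAdjoint a b κ c φ x)) := by
  have hkernel : Tendsto (fun ε => ∫ x' in Icc a b \ Ioo (x - ε) (x + ε), pvKernel κ c φ x x')
      (𝓝[>] 0) (𝓝 (∫ x' in Icc a b, pvKernel κ c φ x x')) := by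
    have hmeas : ∀ ε, MeasurableSet {x' : ℝ | ε ≤ |x' - x|} := fun ε =>
      measurableSet_le measurable_const (by fun_prop)
    simp_rw [Icc_diff_Ioo_eq_inter, ← Measure.restrict_restrict (hmeas _)]
    refine tendsto_setIntegral_of_ae_eventually_mem hmeas
      (hc.integrableOn_pvKernel hφ (Ioo_subset_Icc_self hx)) ?_
    filter_upwards [Measure.ae_ne _ x] with x' hx'
    filter_upwards [Ioc_mem_nhdsGT (abs_pos.mpr (sub_ne_zero.mpr hx'))] with ε hε
    exact hε.2
  have hlog : ∀ᶠ ε in 𝓝[>] 0, max (log (b - x)) (log ε) - max (log (x - a)) (log ε) =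
      log (b - x) - log (x - a) := by
    filter_upwards [Ioo_mem_nhdsGT (lt_min (sub_pos.mpr hx.1) (sub_pos.mpr hx.2))] with ε hε
    rw [max_eq_left (log_le_log hε.1 (hε.2.le.trans (min_le_right _ _))),
      max_eq_left (log_le_log hε.1 (hε.2.le.trans (min_le_left _ _)))]
  refine (hkernel.add_const (2 * κ * φ x * (log (b - x) - log (x - a)))).congr' ?_
  filter_upwards [hlog, self_mem_nhdsWithin] with ε hlogε hε
  rw [truncAdjoint_eq hc hφ hx hε, hlogε]

lemma exists_abs_truncAdjoint_le (hc : IsSymmDiagLipschitzKernel a b κ c)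
    (hφ : LipschitzWith Lφ φ) : ∃ K, ∀ ε > 0, ∀ x ∈ Ioo a b,
      |truncAdjoint a b c φ ε x| ≤ K * (1 + |log (b - x)| + |log (x - a)|) := by
  obtain ⟨M, hM0, hM⟩ := hc.exists_abs_pvKernel_le hφ
  obtain ⟨B, hB0, hB⟩ := hφ.continuous.exists_abs_le_on_Icc a b
  refine ⟨M * |b - a| + 2 * |κ| * B, fun ε hε x hx => ?_⟩
  have hxI := Ioo_subset_Icc_self hx
  have hkernel : |∫ x' in Icc a b \ Ioo (x - ε) (x + ε), pvKernel κ c φ x x'| ≤ M * |b - a| :=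
    calc _ ≤ M * volume.real (Icc a b \ Ioo (x - ε) (x + ε)) := by
          rw [← Real.norm_eq_abs]
          exact norm_setIntegral_le_of_norm_le_const
            ((measure_mono sdiff_subset).trans_lt measure_Icc_lt_top) fun x' hx' => hM x hxI x' hx'.1
      _ ≤ M * |b - a| := by
        grw [measureReal_mono sdiff_subset measure_Icc_lt_top.ne, Real.volume_real_Icc, max_le_iff.mpr ⟨le_abs_self _, abs_nonneg _⟩]
  have hlog : |max (log (b - x)) (log ε) - max (log (x - a)) (log ε)| ≤
      |log (b - x)| + |log (x - a)| :=
    (abs_max_sub_max_le_abs _ _ _).trans (abs_sub _ _)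
  rw [truncAdjoint_eq hc hφ hx hε]
  calc _ ≤ M * |b - a| + 2 * |κ| * B * (|log (b - x)| + |log (x - a)|) := by
        grw [abs_add_le, hkernel, abs_mul, abs_mul, abs_mul, hlog, hB x hxI, abs_two]
    _ ≤ _ := by nlinarith [abs_nonneg (log (b - x)), abs_nonneg (log (x - a)), abs_nonneg κ,
        abs_nonneg (b - a), mul_nonneg hM0 (abs_nonneg (b - a))]

lemma integrable_truncAdjointIntegrand (hc : IsSymmDiagLipschitzKernel a b κ c)
    (hψ : LipschitzWith Lψ ψ) (hφ : LipschitzWith Lφ φ) {ε : ℝ} (hε : 0 < ε) :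
    Integrable (truncAdjointIntegrand c ψ φ ε)
      ((volume.restrict (Icc a b)).prod (volume.restrict (Icc a b))) := by
  obtain ⟨M, hM0, hM⟩ := hc.exists_abs_le
  obtain ⟨Bψ, hBψ0, hBψ⟩ := hψ.continuous.exists_abs_le_on_Icc a b
  obtain ⟨Bφ, hBφ0, hBφ⟩ := hφ.continuous.exists_abs_le_on_Icc a b
  have := hc.measurable; have := hψ.continuous.measurable; have := hφ.continuous.measurable
  refine integrable_prod_Icc_of_abs_le (M := Bψ * (M * (Bφ + Bφ) / ε))
    (Measurable.ite (measurableSet_le measurable_const (by fun_prop)) (by fun_prop)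
      measurable_const).aestronglyMeasurable fun x hx x' hx' => ?_
  simp only [truncAdjointIntegrand]
  split_ifs with hS
  · grw [abs_mul, hBψ x hx, abs_div, abs_mul, hM x hx x' hx', abs_add_le, hBφ x hx, hBφ x' hx', ← hS]
  · rw [abs_zero]
    positivity

lemma integral_mul_truncAdjoint (hc : IsSymmDiagLipschitzKernel a b κ c)
    (hψ : LipschitzWith Lψ ψ) (hφ : LipschitzWith Lφ φ) {ε : ℝ} (hε : 0 < ε) :
    ∫ x in Icc a b, ψ x * truncAdjoint a b c φ ε x =
      -(∫ p in {p : ℝ × ℝ | ε ≤ |p.2 - p.1|}, symmKernel c ψ φ p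
        ∂(volume.restrict (Icc a b)).prod (volume.restrict (Icc a b))) / 2 := by
  have hg := hc.integrable_truncAdjointIntegrand hψ hφ hε
  have hS : MeasurableSet {p : ℝ × ℝ | ε ≤ |p.2 - p.1|} :=
    measurableSet_le measurable_const (by fun_prop)
  simp_rw [mul_truncAdjoint_eq_integral]
  rw [← integral_prod _ hg, integral_prod_self_eq_half_integral_add_swap hg,
    ← integral_indicator hS, ← integral_neg]
  simp_rw [truncAdjointIntegrand_add_swap hc.symm]

lemma integrable_symmKernel (hc : IsSymmDiagLipschitzKernel a b κ c)
    (hψ : LipschitzWith Lψ ψ) (hφ : LipschitzWith Lφ φ) :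
    Integrable (symmKernel c ψ φ)
      ((volume.restrict (Icc a b)).prod (volume.restrict (Icc a b))) := by
  obtain ⟨M, hM0, hM⟩ := hc.exists_abs_diffQuot_le hψ
  obtain ⟨B, -, hB⟩ := hφ.continuous.exists_abs_le_on_Icc a b
  have := hc.measurable; have := hψ.continuous.measurable; have := hφ.continuous.measurable
  refine integrable_prod_Icc_of_abs_le (M := M * (B + B))
    (by unfold symmKernel; fun_prop : Measurable (symmKernel c ψ φ)).aestronglyMeasurable
    fun x hx x' hx' => ?_
  simp only [symmKernel]
  grw [abs_mul, hM x hx x' hx', abs_add_le, hB x hx, hB x' hx']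

lemma tendsto_integral_mul_truncAdjoint (hc : IsSymmDiagLipschitzKernel a b κ c)
    (hψ : LipschitzWith Lψ ψ) (hφ : LipschitzWith Lφ φ) :
    Tendsto (fun ε => ∫ x in Icc a b, ψ x * truncAdjoint a b c φ ε x) (𝓝[>] 0)
      (𝓝 (∫ x in Icc a b, ψ x * pvAdjoint a b κ c φ x)) := by
  obtain ⟨K, hK⟩ := hc.exists_abs_truncAdjoint_le hφ
  obtain ⟨B, hB0, hB⟩ := hψ.continuous.exists_abs_le_on_Icc a b
  have hIoo : ∀ᵐ x ∂(volume.restrict (Icc a b)), x ∈ Ioo a b := by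
    rw [← Measure.restrict_congr_set Ioo_ae_eq_Icc]
    exact ae_restrict_mem measurableSet_Ioo
  refine tendsto_integral_filter_of_dominated_convergence
    (fun x => B * (K * (1 + |log (b - x)| + |log (x - a)|))) ?_ ?_ ?_ ?_
  · filter_upwards [self_mem_nhdsWithin] with ε hε
    simpa only [← mul_truncAdjoint_eq_integral] using
      (hc.integrable_truncAdjointIntegrand hψ hφ hε).integral_prod_left.aestronglyMeasurable
  · filter_upwards [self_mem_nhdsWithin] with ε hε
    filter_upwards [hIoo] with x hx
    rw [Real.norm_eq_abs, abs_mul]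
    exact mul_le_mul (hB x (Ioo_subset_Icc_self hx)) (hK ε hε x hx) (abs_nonneg _) hB0
  · exact (((integrable_const 1).add (integrableOn_log_sub_right a b).abs).add
      (integrableOn_log_sub_left a b).abs).const_mul K |>.const_mul B
  · filter_upwards [hIoo] with x hx
    exact (hc.tendsto_truncAdjoint hφ hx).const_mul (ψ x)

lemma integral_mul_pvAdjoint (hc : IsSymmDiagLipschitzKernel a b κ c)
    (hψ : LipschitzWith Lψ ψ) (hφ : LipschitzWith Lφ φ) :
    ∫ x in Icc a b, ψ x * pvAdjoint a b κ c φ x =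
      -(∫ p, symmKernel c ψ φ p
        ∂(volume.restrict (Icc a b)).prod (volume.restrict (Icc a b))) / 2 := by
  refine tendsto_nhds_unique (hc.tendsto_integral_mul_truncAdjoint hψ hφ) ?_
  have hS : ∀ ε, MeasurableSet {p : ℝ × ℝ | ε ≤ |p.2 - p.1|} := fun ε =>
    measurableSet_le measurable_const (by fun_prop)
  have hsymm := tendsto_setIntegral_of_ae_eventually_mem (l := 𝓝[>] 0) hS
    (hc.integrable_symmKernel hψ hφ) <| by
      filter_upwards [ae_snd_ne_fst] with p hp
      filter_upwards [Ioc_mem_nhdsGT (abs_pos.mpr (sub_ne_zero.mpr hp))] with ε hε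
      exact hε.2
  refine (hsymm.neg.div_const 2).congr' ?_
  filter_upwards [self_mem_nhdsWithin] with ε hε
  exact (hc.integral_mul_truncAdjoint hψ hφ hε).symm

lemma integral_diffQuot_mul (hc : IsSymmDiagLipschitzKernel a b κ c)
    (hψ : LipschitzWith Lψ ψ) (hφ : LipschitzWith Lφ φ) :
    ∫ x in Icc a b, (∫ x' in Icc a b, c x x' * (ψ x' - ψ x) / (x' - x)) * φ x =
      (∫ p, symmKernel c ψ φ p
        ∂(volume.restrict (Icc a b)).prod (volume.restrict (Icc a b))) / 2 := by
  obtain ⟨M, hM0, hM⟩ := hc.exists_abs_diffQuot_le hψ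
  obtain ⟨B, -, hB⟩ := hφ.continuous.exists_abs_le_on_Icc a b
  have := hc.measurable; have := hψ.continuous.measurable; have := hφ.continuous.measurable
  have hf : Integrable (fun p : ℝ × ℝ => c p.1 p.2 * (ψ p.2 - ψ p.1) / (p.2 - p.1) * φ p.1)
      ((volume.restrict (Icc a b)).prod (volume.restrict (Icc a b))) :=
    integrable_prod_Icc_of_abs_le (M := M * B) (by fun_prop : Measurable _).aestronglyMeasurable
      fun x hx x' hx' => by grw [abs_mul, hM x hx x' hx', hB x hx]
  simp_rw [← integral_mul_const]
  rw [← integral_prod _ hf, integral_prod_self_eq_half_integral_add_swap hf]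
  congr 2
  ext p
  exact (symmKernel_eq_add_swap hc.symm ψ φ p).symm

end IsSymmDiagLipschitzKernel

theorem stmt_3_general (a b : ℝ) (Φ ψ φ k : ℝ → ℝ)
    (LΦ Lψ Lφ Lk : NNReal)
    (hΦ : LipschitzWith LΦ Φ) (hψ : LipschitzWith Lψ ψ) (hφ : LipschitzWith Lφ φ)
    (hk : LipschitzWith Lk k) (hke : ∀ u, k (-u) = k u) :
    ∃ pv : ℝ → ℝ,
      (∀ x ∈ Set.Ioo a b, Filter.Tendsto
        (fun ε : ℝ => (1 / Real.pi) * ∫ x' in Set.Icc a b \ Set.Ioo (x - ε) (x + ε),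
          Real.cos (Φ x' - Φ x) * k (x' - x) * (φ x' + φ x) / (x' - x))
        (nhdsWithin 0 (Set.Ioi 0)) (nhds (pv x))) ∧
      (∫ x in Set.Icc a b,
          ((1 / Real.pi) * ∫ x' in Set.Icc a b,
            Real.cos (Φ x' - Φ x) * k (x' - x) * (ψ x' - ψ x) / (x' - x)) * φ x)
        = - ∫ x in Set.Icc a b, ψ x * pv x := by
  have hc := isSymmDiagLipschitzKernel_cos_mul hΦ hk hke a b
  refine ⟨fun x => 1 / π * pvAdjoint a b (k 0) _ φ x,
    fun x hx => (hc.tendsto_truncAdjoint hφ hx).const_mul _, ?_⟩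
  simp only [mul_assoc (1 / π), mul_left_comm (ψ _) (1 / π), integral_const_mul]
  rw [hc.integral_diffQuot_mul hψ hφ, hc.integral_mul_pvAdjoint hψ hφ]
  ring

/-- One-dimensional core of the adjoint computation for the roof wavefront sensor:
the L²-pairing of the Fréchet derivative applied to `ψ` against `φ` equals minus the
pairing of `ψ` against the principal-value adjoint applied to `φ`; the inner
principal-value limit exists for every `x ∈ (a,b)`. -/
theorem stmt_3 (a b : ℝ) (hab : a < b) (Φ ψ φ k : ℝ → ℝ)
    (LΦ Lψ Lφ Lk : NNReal)
    (hΦ : LipschitzWith LΦ Φ) (hψ : LipschitzWith Lψ ψ) (hφ : LipschitzWith Lφ φ)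
    (hk : LipschitzWith Lk k) (hke : ∀ u, k (-u) = k u) :
    ∃ pv : ℝ → ℝ,
      (∀ x ∈ Set.Ioo a b, Filter.Tendsto
        (fun ε : ℝ => (1 / Real.pi) * ∫ x' in Set.Icc a b \ Set.Ioo (x - ε) (x + ε),
          Real.cos (Φ x' - Φ x) * k (x' - x) * (φ x' + φ x) / (x' - x))
        (nhdsWithin 0 (Set.Ioi 0)) (nhds (pv x))) ∧
      (∫ x in Set.Icc a b,
          ((1 / Real.pi) * ∫ x' in Set.Icc a b,
            Real.cos (Φ x' - Φ x) * k (x' - x) * (ψ x' - ψ x) / (x' - x)) * φ x)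
        = - ∫ x in Set.Icc a b, ψ x * pv x :=
  stmt_3_general a b Φ ψ φ k LΦ Lψ Lφ Lk hΦ hψ hφ hk hke
end

section
/- Let X and Y be real Hilbert spaces, let P : X → Y be a map, let Φ_k, Φ_* ∈ X, let s, s^δ ∈ Y, let δ ≥ 0 and η ≥ 0, and let A : X → Y be a bounded linear operator with operator norm ‖A‖ ≤ 1. Assume P(Φ_*) = s, ‖s^δ − s‖ ≤ δ, and the linearization estimate ‖P(Φ_k) − P(Φ_*) − A(Φ_k − Φ_*)‖ ≤ η‖P(Φ_k) − P(Φ_*)‖. Define Φ_{k+1} = Φ_k + A*(s^δ − P(Φ_k)), where A* is the Hilbert-space adjoint of A. Then ‖Φ_{k+1} − Φ_*‖² − ‖Φ_k − Φ_*‖² ≤ ‖s^δ − P(Φ_k)‖ · ( 2(1+η)δ − (1−2η)‖s^δ − P(Φ_k)‖ ). -/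
/-!
Write `e = Φ_k − Φ_*` and `r = s^δ − P(Φ_k)`. Expanding the square and moving the adjoint across
the inner product gives `‖e + A*r‖² − ‖e‖² ≤ 2⟪Ae, r⟫ + ‖r‖²` since `‖A*‖ = ‖A‖ ≤ 1`. The
tangential cone condition says that `Ae` is close to the exact residual `y = P(Φ_k) − s`, while
`y = −r + (s^δ − s)` is within `δ` of `−r`; hence `⟪Ae, r⟫ ≤ ‖r‖((1+η)δ − (1−η)‖r‖)`.
-/

open ContinuousLinearMap

theorem norm_add_adjoint_sq_sub_norm_sq_le {X Y : Type*} [NormedAddCommGroup X]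
    [InnerProductSpace ℝ X] [CompleteSpace X] [NormedAddCommGroup Y] [InnerProductSpace ℝ Y]
    [CompleteSpace Y] {A : X →L[ℝ] Y} (hA : ‖A‖ ≤ 1) (e : X) (r : Y) :
    ‖e + adjoint A r‖ ^ 2 - ‖e‖ ^ 2 ≤ 2 * inner ℝ (A e) r + ‖r‖ ^ 2 := by
  have hAr : ‖adjoint A r‖ ≤ ‖r‖ := by
    have := (adjoint A).le_of_opNorm_le (by simpa using hA) r
    rwa [one_mul] at this
  have hAr_sq : ‖adjoint A r‖ ^ 2 ≤ ‖r‖ ^ 2 := pow_le_pow_left₀ (norm_nonneg _) hAr 2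
  rw [norm_add_sq_real, adjoint_inner_right]
  linarith

theorem real_inner_le_of_norm_sub_le_of_norm_add_le {Y : Type*} [NormedAddCommGroup Y]
    [InnerProductSpace ℝ Y] {v y r : Y} {δ η : ℝ} (hη : 0 ≤ η) (hvy : ‖y - v‖ ≤ η * ‖y‖)
    (hry : ‖r + y‖ ≤ δ) :
    inner ℝ v r ≤ ‖r‖ * ((1 + η) * δ - (1 - η) * ‖r‖) := by
  have hy : ‖y‖ ≤ ‖r‖ + δ := by
    calc ‖y‖ = ‖-r + (r + y)‖ := by rw [neg_add_cancel_left]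
      _ ≤ ‖r‖ + δ := (norm_add_le _ _).trans (by rw [norm_neg]; gcongr)
  have hlin : inner ℝ (v - y) r ≤ η * (‖r‖ + δ) * ‖r‖ :=
    calc inner ℝ (v - y) r ≤ ‖v - y‖ * ‖r‖ := real_inner_le_norm _ _
      _ ≤ η * (‖r‖ + δ) * ‖r‖ := by
        rw [norm_sub_rev]
        gcongr
        exact hvy.trans (by gcongr)
  have hres : inner ℝ y r ≤ δ * ‖r‖ - ‖r‖ ^ 2 := by
    have hsplit : inner ℝ y r = inner ℝ (r + y) r - ‖r‖ ^ 2 := by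
      rw [inner_add_left, real_inner_self_eq_norm_sq]; ring
    have hnoise : inner ℝ (r + y) r ≤ δ * ‖r‖ :=
      (real_inner_le_norm _ _).trans (by gcongr)
    linarith
  have hsum : inner ℝ v r = inner ℝ (v - y) r + inner ℝ y r := by
    rw [← inner_add_left, sub_add_cancel]
  rw [hsum]
  linarith

theorem stmt_9_general {X Y : Type*} [NormedAddCommGroup X] [InnerProductSpace ℝ X] [CompleteSpace X]
    [NormedAddCommGroup Y] [InnerProductSpace ℝ Y] [CompleteSpace Y]
    (P : X → Y) (Φk Φstar : X) (s sδ : Y) (δ η : ℝ) (hη : 0 ≤ η)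
    (A : X →L[ℝ] Y) (hA : ‖A‖ ≤ 1)
    (hsol : P Φstar = s) (hnoise : ‖sδ - s‖ ≤ δ)
    (hcone : ‖P Φk - P Φstar - A (Φk - Φstar)‖ ≤ η * ‖P Φk - P Φstar‖) :
    ‖(Φk + ContinuousLinearMap.adjoint A (sδ - P Φk)) - Φstar‖ ^ 2 - ‖Φk - Φstar‖ ^ 2 ≤
      ‖sδ - P Φk‖ * (2 * (1 + η) * δ - (1 - 2 * η) * ‖sδ - P Φk‖) := by
  subst hsol
  have hstep := norm_add_adjoint_sq_sub_norm_sq_le hA (Φk - Φstar) (sδ - P Φk)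
  have hinner := real_inner_le_of_norm_sub_le_of_norm_add_le hη hcone
    (r := sδ - P Φk) (δ := δ) (by rwa [sub_add_sub_cancel])
  rw [add_sub_right_comm]
  linarith

/-- Fundamental one-step error estimate for the non-linear Landweber iteration
`Φ_{k+1} = Φ_k + A*(s^δ − P(Φ_k))` under the scaling condition `‖A‖ ≤ 1` and the
tangential cone condition with constant `η`. -/
theorem stmt_9 {X Y : Type*} [NormedAddCommGroup X] [InnerProductSpace ℝ X] [CompleteSpace X]
    [NormedAddCommGroup Y] [InnerProductSpace ℝ Y] [CompleteSpace Y]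
    (P : X → Y) (Φk Φstar : X) (s sδ : Y) (δ η : ℝ) (hδ : 0 ≤ δ) (hη : 0 ≤ η)
    (A : X →L[ℝ] Y) (hA : ‖A‖ ≤ 1)
    (hsol : P Φstar = s) (hnoise : ‖sδ - s‖ ≤ δ)
    (hcone : ‖P Φk - P Φstar - A (Φk - Φstar)‖ ≤ η * ‖P Φk - P Φstar‖) :
    ‖(Φk + ContinuousLinearMap.adjoint A (sδ - P Φk)) - Φstar‖ ^ 2 - ‖Φk - Φstar‖ ^ 2 ≤
      ‖sδ - P Φk‖ * (2 * (1 + η) * δ - (1 - 2 * η) * ‖sδ - P Φk‖) :=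
  stmt_9_general P Φk Φstar s sδ δ η hη A hA hsol hnoise hcone
end

section
/- Let X and Y be real Hilbert spaces, let P : X → Y be a map, let Φ_k, Φ_* ∈ X, let s, s^δ ∈ Y, let δ ≥ 0, 0 ≤ η < 1/2, and τ ≥ 2(1+η)/(1−2η), and let A : X → Y be a bounded linear operator with ‖A‖ ≤ 1. Assume P(Φ_*) = s, ‖s^δ − s‖ ≤ δ, the tangential cone estimate ‖P(Φ_k) − P(Φ_*) − A(Φ_k − Φ_*)‖ ≤ η‖P(Φ_k) − P(Φ_*)‖, and ‖s^δ − P(Φ_k)‖ > τδ. Define Φ_{k+1} = Φ_k + A*(s^δ − P(Φ_k)). Then ‖Φ_{k+1} − Φ_*‖ < ‖Φ_k − Φ_*‖. -/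
/-!
Write `e = Φ_k − Φ_*` and `r = s^δ − P(Φ_k)`. Expanding the square and using `‖A*‖ ≤ 1`,
`‖e + A* r‖² ≤ ‖e‖² + 2⟪A e, r⟫ + ‖r‖²`. The tangential cone condition says that `A e` is, up to
an error of size `η ‖P(Φ_k) − s‖ ≤ η (‖r‖ + δ)`, the vector `(s^δ − s) − r`, so
`2⟪A e, r⟫ + ‖r‖² ≤ ‖r‖ ((2η − 1) ‖r‖ + 2 (1 + η) δ)`, and the choice of `τ` makes the right-hand
side negative as soon as `‖r‖ > τ δ`.
-/

open ContinuousLinearMap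

theorem norm_add_adjoint_apply_sq_le {X Y : Type*} [NormedAddCommGroup X]
    [InnerProductSpace ℝ X] [CompleteSpace X] [NormedAddCommGroup Y] [InnerProductSpace ℝ Y]
    [CompleteSpace Y] {A : X →L[ℝ] Y} (hA : ‖A‖ ≤ 1) (e : X) (r : Y) :
    ‖e + adjoint A r‖ ^ 2 ≤ ‖e‖ ^ 2 + 2 * inner ℝ (A e) r + ‖r‖ ^ 2 := by
  have hAr : ‖adjoint A r‖ ≤ ‖r‖ := by
    simpa using (adjoint A).le_of_opNorm_le (c := 1) (by rwa [LinearIsometryEquiv.norm_map]) r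
  rw [norm_add_sq_real, adjoint_inner_right]
  gcongr

theorem two_inner_sub_sub_add_norm_sq_le {Y : Type*} [NormedAddCommGroup Y]
    [InnerProductSpace ℝ Y] {n r w : Y} {δ η : ℝ} (hη : 0 ≤ η) (hn : ‖n‖ ≤ δ)
    (hw : ‖w‖ ≤ η * ‖n - r‖) :
    2 * inner ℝ (n - r - w) r + ‖r‖ ^ 2 ≤ ‖r‖ * ((2 * η - 1) * ‖r‖ + 2 * (1 + η) * δ) := by
  have hnr : inner ℝ n r ≤ δ * ‖r‖ :=
    (real_inner_le_norm n r).trans (mul_le_mul_of_nonneg_right hn (norm_nonneg r))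
  have hwr : -inner ℝ w r ≤ η * (‖r‖ + δ) * ‖r‖ := calc
    -inner ℝ w r ≤ ‖w‖ * ‖r‖ := (neg_le_abs _).trans (abs_real_inner_le_norm w r)
    _ ≤ η * (‖r‖ + δ) * ‖r‖ := by
      gcongr
      calc ‖w‖ ≤ η * ‖n - r‖ := hw
        _ ≤ η * (‖r‖ + δ) := by gcongr; linarith [norm_sub_le n r]
  rw [inner_sub_left, inner_sub_left, real_inner_self_eq_norm_sq]
  nlinarith

theorem mul_discrepancy_factor_neg {δ η τ R : ℝ} (hδ : 0 ≤ δ) (hη0 : 0 ≤ η) (hη : η < 1 / 2)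
    (hτ : 2 * (1 + η) / (1 - 2 * η) ≤ τ) (hR : τ * δ < R) :
    R * ((2 * η - 1) * R + 2 * (1 + η) * δ) < 0 := by
  have h2η : 0 < 1 - 2 * η := by linarith
  have hτ0 : 0 ≤ τ := (div_nonneg (by linarith) h2η.le).trans hτ
  rw [div_le_iff₀ h2η] at hτ
  have hRpos : 0 < R := (mul_nonneg hτ0 hδ).trans_lt hR
  refine mul_neg_of_pos_of_neg hRpos ?_
  nlinarith [mul_le_mul_of_nonneg_right hτ hδ, mul_lt_mul_of_pos_left hR h2η]

/-- Monotone error decrease of the non-linear Landweber step before the discrepancy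
principle is triggered: if `‖s^δ − P(Φ_k)‖ > τδ` with `τ ≥ 2(1+η)/(1−2η)`, `η < 1/2`,
then the Landweber update strictly decreases the distance to the solution `Φ_*`. -/
theorem stmt_10 {X Y : Type*} [NormedAddCommGroup X] [InnerProductSpace ℝ X] [CompleteSpace X]
    [NormedAddCommGroup Y] [InnerProductSpace ℝ Y] [CompleteSpace Y]
    (P : X → Y) (Φk Φstar : X) (s sδ : Y) (δ η τ : ℝ)
    (hδ : 0 ≤ δ) (hη0 : 0 ≤ η) (hη : η < 1 / 2) (hτ : 2 * (1 + η) / (1 - 2 * η) ≤ τ)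
    (A : X →L[ℝ] Y) (hA : ‖A‖ ≤ 1)
    (hsol : P Φstar = s) (hnoise : ‖sδ - s‖ ≤ δ)
    (hcone : ‖P Φk - P Φstar - A (Φk - Φstar)‖ ≤ η * ‖P Φk - P Φstar‖)
    (hdisc : τ * δ < ‖sδ - P Φk‖) :
    ‖(Φk + ContinuousLinearMap.adjoint A (sδ - P Φk)) - Φstar‖ < ‖Φk - Φstar‖ := by
  set e := Φk - Φstar
  set r := sδ - P Φk
  set w := P Φk - P Φstar - A e
  rw [add_sub_right_comm]
  have hAe : A e = (sδ - s) - r - w := by simp only [w, r, hsol]; abel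
  have hw : ‖w‖ ≤ η * ‖(sδ - s) - r‖ := by
    rwa [show sδ - s - r = P Φk - P Φstar by simp only [r, hsol]; abel]
  refine lt_of_pow_lt_pow_left₀ 2 (norm_nonneg e) ?_
  calc ‖e + adjoint A r‖ ^ 2 ≤ ‖e‖ ^ 2 + 2 * inner ℝ (A e) r + ‖r‖ ^ 2 :=
        norm_add_adjoint_apply_sq_le hA e r
    _ ≤ ‖e‖ ^ 2 + ‖r‖ * ((2 * η - 1) * ‖r‖ + 2 * (1 + η) * δ) := by
        rw [hAe]; linarith [two_inner_sub_sub_add_norm_sq_le hη0 hnoise hw]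
    _ < ‖e‖ ^ 2 := by linarith [mul_discrepancy_factor_neg hδ hη0 hη hτ hdisc]
end

section
/- Let X and Y be real Hilbert spaces, Φ₀ ∈ X, ρ > 0, 0 ≤ η < 1/2, and let P : X → Y be Fréchet differentiable at every point of the closed ball B = {Φ : ‖Φ − Φ₀‖ ≤ 2ρ}, with derivative P'(Φ) satisfying ‖P'(Φ)‖ ≤ 1 for all Φ ∈ B and the tangential cone condition ‖P(Φ) − P(Φ̃) − P'(Φ)(Φ − Φ̃)‖ ≤ η‖P(Φ) − P(Φ̃)‖ for all Φ, Φ̃ ∈ B. Let s ∈ Y and suppose there exists Φ_* with ‖Φ_* − Φ₀‖ ≤ ρ and P(Φ_*) = s. Define Φ_{k+1} = Φ_k + P'(Φ_k)*(s − P(Φ_k)) with Φ_0 = Φ₀. Then every iterate Φ_k satisfies ‖Φ_k − Φ_*‖ ≤ ‖Φ₀ − Φ_*‖ (in particular Φ_k ∈ B for all k), and Σ_{k=0}^∞ ‖s − P(Φ_k)‖² ≤ ‖Φ₀ − Φ_*‖² / (1 − 2η); in particular ‖s − P(Φ_k)‖ → 0 as k → ∞. -/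
open ContinuousLinearMap Filter

/-!
Write `e = Φ_k − Φ_*` and `d = P(Φ_k) − s`. The tangential cone condition between `Φ_k` and
`Φ_*` says `‖d − P'(Φ_k) e‖ ≤ η‖d‖`, so `⟪P'(Φ_k) e, d⟫ ≥ (1 − η)‖d‖²`; together with
`‖P'(Φ_k)*‖ ≤ 1` this gives `‖e − P'(Φ_k)* d‖² ≤ ‖e‖² − (1 − 2η)‖d‖²`. Hence the error is
non-increasing, which keeps every iterate in `B_{2ρ}(Φ₀)` where the assumptions hold, and
telescoping the same inequality bounds the partial sums of the squared residuals.
-/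

section Landweber

variable {X Y : Type*} [NormedAddCommGroup X] [InnerProductSpace ℝ X] [CompleteSpace X]
  [NormedAddCommGroup Y] [InnerProductSpace ℝ Y] [CompleteSpace Y]

theorem norm_sub_adjoint_sq_add_le {A : X →L[ℝ] Y} (hA : ‖A‖ ≤ 1) {η : ℝ} {e : X} {d : Y}
    (hcone : ‖d - A e‖ ≤ η * ‖d‖) :
    ‖e - adjoint A d‖ ^ 2 + (1 - 2 * η) * ‖d‖ ^ 2 ≤ ‖e‖ ^ 2 := by
  have hexpand : ‖e - adjoint A d‖ ^ 2 = ‖e‖ ^ 2 - 2 * inner ℝ (A e) d + ‖adjoint A d‖ ^ 2 := by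
    rw [norm_sub_sq_real, adjoint_inner_right]
  have hinner : (1 - η) * ‖d‖ ^ 2 ≤ inner ℝ (A e) d := by
    have h : inner ℝ (d - A e) d ≤ η * ‖d‖ ^ 2 := by
      calc inner ℝ (d - A e) d ≤ ‖d - A e‖ * ‖d‖ := real_inner_le_norm _ _
        _ ≤ η * ‖d‖ * ‖d‖ := by gcongr
        _ = η * ‖d‖ ^ 2 := by ring
    rw [inner_sub_left, real_inner_self_eq_norm_sq] at h
    linarith
  have hadj : ‖adjoint A d‖ ≤ ‖d‖ := by
    calc ‖adjoint A d‖ ≤ ‖adjoint A‖ * ‖d‖ := (adjoint A).le_opNorm d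
      _ ≤ 1 * ‖d‖ := by rw [LinearIsometryEquiv.norm_map]; gcongr
      _ = ‖d‖ := one_mul _
  have hadj_sq : ‖adjoint A d‖ ^ 2 ≤ ‖d‖ ^ 2 := by gcongr
  linarith

end Landweber

theorem summable_and_tsum_le_of_add_mul_le {a b : ℕ → ℝ} {c : ℝ} (hc : 0 < c)
    (ha : ∀ k, 0 ≤ a k) (hb : ∀ k, 0 ≤ b k) (hdecr : ∀ k, a (k + 1) + c * b k ≤ a k) :
    Summable b ∧ ∑' k, b k ≤ a 0 / c := by
  have htelescope : ∀ n, c * ∑ k ∈ Finset.range n, b k ≤ a 0 - a n := by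
    intro n
    induction n with
    | zero => simp
    | succ n ih => rw [Finset.sum_range_succ, mul_add]; linarith [hdecr n]
  have hpartial : ∀ n, ∑ k ∈ Finset.range n, b k ≤ a 0 / c := fun n => by
    rw [le_div_iff₀ hc, mul_comm]
    linarith [htelescope n, ha n]
  have hsum : Summable b := summable_of_sum_range_le hb hpartial
  exact ⟨hsum, hsum.tsum_le_of_sum_range_le hpartial⟩

theorem tendsto_zero_of_summable_sq {f : ℕ → ℝ} (hf : ∀ k, 0 ≤ f k)
    (hsum : Summable fun k => f k ^ 2) : Tendsto f atTop (nhds 0) := by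
  have h := hsum.tendsto_atTop_zero.sqrt
  rw [Real.sqrt_zero] at h
  exact h.congr fun k => Real.sqrt_sq (hf k)

theorem stmt_11_general {X Y : Type*} [NormedAddCommGroup X] [InnerProductSpace ℝ X] [CompleteSpace X]
    [NormedAddCommGroup Y] [InnerProductSpace ℝ Y] [CompleteSpace Y]
    (P : X → Y) (P' : X → X →L[ℝ] Y) (Φ₀ : X) (ρ η : ℝ)
    (hη : η < 1 / 2)
    (hscale : ∀ Φ, ‖Φ - Φ₀‖ ≤ 2 * ρ → ‖P' Φ‖ ≤ 1)
    (hcone : ∀ Φ Φ', ‖Φ - Φ₀‖ ≤ 2 * ρ → ‖Φ' - Φ₀‖ ≤ 2 * ρ →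
      ‖P Φ - P Φ' - P' Φ (Φ - Φ')‖ ≤ η * ‖P Φ - P Φ'‖)
    (s : Y) (Φstar : X) (hstar : ‖Φstar - Φ₀‖ ≤ ρ) (hsol : P Φstar = s)
    (Φ : ℕ → X) (hΦ0 : Φ 0 = Φ₀)
    (hiter : ∀ k, Φ (k + 1) = Φ k + ContinuousLinearMap.adjoint (P' (Φ k)) (s - P (Φ k))) :
    (∀ k, ‖Φ k - Φstar‖ ≤ ‖Φ₀ - Φstar‖) ∧
    (∀ k, ‖Φ k - Φ₀‖ ≤ 2 * ρ) ∧
    Summable (fun k => ‖s - P (Φ k)‖ ^ 2) ∧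
    (∑' k, ‖s - P (Φ k)‖ ^ 2) ≤ ‖Φ₀ - Φstar‖ ^ 2 / (1 - 2 * η) ∧
    Filter.Tendsto (fun k => ‖s - P (Φ k)‖) Filter.atTop (nhds 0) := by
  have hstar_ball : ‖Φstar - Φ₀‖ ≤ 2 * ρ := by linarith [norm_nonneg (Φstar - Φ₀)]
  have hstep : ∀ k, ‖Φ k - Φ₀‖ ≤ 2 * ρ →
      ‖Φ (k + 1) - Φstar‖ ^ 2 + (1 - 2 * η) * ‖s - P (Φ k)‖ ^ 2 ≤ ‖Φ k - Φstar‖ ^ 2 := by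
    intro k hk
    have hnext : Φ (k + 1) - Φstar = Φ k - Φstar - adjoint (P' (Φ k)) (P (Φ k) - P Φstar) := by
      rw [hiter k, hsol, ← neg_sub (P (Φ k)) s, map_neg]; abel
    rw [hnext, norm_sub_rev s, ← hsol]
    exact norm_sub_adjoint_sq_add_le (hscale _ hk) (hcone _ _ hk hstar_ball)
  have hball_of_le : ∀ x, ‖x - Φstar‖ ≤ ‖Φ₀ - Φstar‖ → ‖x - Φ₀‖ ≤ 2 * ρ := fun x hx => by
    rw [norm_sub_rev Φ₀] at hx
    linarith [norm_sub_le_norm_sub_add_norm_sub x Φstar Φ₀]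
  have herr : ∀ k, ‖Φ k - Φstar‖ ≤ ‖Φ₀ - Φstar‖ := by
    intro k
    induction k with
    | zero => rw [hΦ0]
    | succ k ih =>
      have h := hstep k (hball_of_le _ ih)
      have hsq : ‖Φ (k + 1) - Φstar‖ ^ 2 ≤ ‖Φ k - Φstar‖ ^ 2 := by
        linarith [mul_nonneg (by linarith : (0 : ℝ) ≤ 1 - 2 * η) (sq_nonneg ‖s - P (Φ k)‖)]
      exact (pow_le_pow_iff_left₀ (norm_nonneg _) (norm_nonneg _) two_ne_zero).mp hsq |>.trans ih
  have hball : ∀ k, ‖Φ k - Φ₀‖ ≤ 2 * ρ := fun k => hball_of_le _ (herr k)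
  obtain ⟨hsum, htsum⟩ := summable_and_tsum_le_of_add_mul_le (by linarith)
    (fun k => sq_nonneg ‖Φ k - Φstar‖) (fun k => sq_nonneg ‖s - P (Φ k)‖)
    (fun k => hstep k (hball k))
  rw [hΦ0] at htsum
  exact ⟨herr, hball, hsum, htsum, tendsto_zero_of_summable_sq (fun _ => norm_nonneg _) hsum⟩

/-- Well-definedness and residual square-summability of the exact-data non-linear
Landweber iteration under the scaling condition `‖P'(Φ)‖ ≤ 1` and the tangential cone
condition with constant `η < 1/2` on the ball `B_{2ρ}(Φ₀)`, when a solution exists in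
`B_ρ(Φ₀)`: all iterates satisfy `‖Φ_k − Φ_*‖ ≤ ‖Φ₀ − Φ_*‖` (hence stay in the ball),
`Σ_k ‖s − P(Φ_k)‖² ≤ ‖Φ₀ − Φ_*‖²/(1−2η)`, and the residuals tend to `0`. -/
theorem stmt_11 {X Y : Type*} [NormedAddCommGroup X] [InnerProductSpace ℝ X] [CompleteSpace X]
    [NormedAddCommGroup Y] [InnerProductSpace ℝ Y] [CompleteSpace Y]
    (P : X → Y) (P' : X → X →L[ℝ] Y) (Φ₀ : X) (ρ η : ℝ)
    (hρ : 0 < ρ) (hη0 : 0 ≤ η) (hη : η < 1 / 2)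
    (hdiff : ∀ Φ, ‖Φ - Φ₀‖ ≤ 2 * ρ → HasFDerivAt P (P' Φ) Φ)
    (hscale : ∀ Φ, ‖Φ - Φ₀‖ ≤ 2 * ρ → ‖P' Φ‖ ≤ 1)
    (hcone : ∀ Φ Φ', ‖Φ - Φ₀‖ ≤ 2 * ρ → ‖Φ' - Φ₀‖ ≤ 2 * ρ →
      ‖P Φ - P Φ' - P' Φ (Φ - Φ')‖ ≤ η * ‖P Φ - P Φ'‖)
    (s : Y) (Φstar : X) (hstar : ‖Φstar - Φ₀‖ ≤ ρ) (hsol : P Φstar = s)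
    (Φ : ℕ → X) (hΦ0 : Φ 0 = Φ₀)
    (hiter : ∀ k, Φ (k + 1) = Φ k + ContinuousLinearMap.adjoint (P' (Φ k)) (s - P (Φ k))) :
    (∀ k, ‖Φ k - Φstar‖ ≤ ‖Φ₀ - Φstar‖) ∧
    (∀ k, ‖Φ k - Φ₀‖ ≤ 2 * ρ) ∧
    Summable (fun k => ‖s - P (Φ k)‖ ^ 2) ∧
    (∑' k, ‖s - P (Φ k)‖ ^ 2) ≤ ‖Φ₀ - Φstar‖ ^ 2 / (1 - 2 * η) ∧
    Filter.Tendsto (fun k => ‖s - P (Φ k)‖) Filter.atTop (nhds 0) :=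
  stmt_11_general P P' Φ₀ ρ η hη hscale hcone s Φstar hstar hsol Φ hΦ0 hiter
end

section
/- Let X and Y be real Hilbert spaces, Φ₀ ∈ X, ρ > 0, 0 ≤ η < 1/2, and let P : X → Y be Fréchet differentiable at every point of the closed ball B = {Φ : ‖Φ − Φ₀‖ ≤ 2ρ}, with ‖P'(Φ)‖ ≤ 1 on B and the tangential cone condition ‖P(Φ) − P(Φ̃) − P'(Φ)(Φ − Φ̃)‖ ≤ η‖P(Φ) − P(Φ̃)‖ for all Φ, Φ̃ ∈ B. Let s ∈ Y, and let Φ† ∈ X with ‖Φ† − Φ₀‖ ≤ ρ be a Φ₀-minimum-norm solution, i.e., P(Φ†) = s and ‖Φ† − Φ₀‖ ≤ ‖Φ − Φ₀‖ for every Φ ∈ B with P(Φ) = s. Assume in addition that ker P'(Φ†) ⊆ ker P'(Φ) for all Φ with ‖Φ − Φ†‖ ≤ ρ. Then the exact-data Landweber iterates Φ_{k+1} = Φ_k + P'(Φ_k)*(s − P(Φ_k)), Φ_0 = Φ₀, converge in norm to Φ† as k → ∞. -/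
/-!
The error `‖Φ k - Φ†‖` is non-increasing and `∑ ‖s - P (Φ k)‖²` is finite: by the tangential
cone condition one Landweber step decreases `‖Φ k - Φ†‖²` by at least
`(1 - 2η) ‖s - P (Φ k)‖²`. Any two late iterates are then close to the iterate `Φ l` of smallest
residual between them, since every increment `P'(Φ i)* (s - P (Φ i))` is almost orthogonal to
`Φ l - Φ†`; so the iterates converge, and the cone condition makes the limit `L` a solution.
Each increment lies in `(ker P'(Φ i))ᗮ ⊆ (ker P'(Φ†))ᗮ`, hence so does `L - Φ₀`, whereas
`L - Φ†` lies in `ker P'(Φ†)`; Pythagoras and the minimality of `‖Φ† - Φ₀‖` give `L = Φ†`.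
-/

open ContinuousLinearMap Filter Finset Metric
open scoped RealInnerProductSpace Topology

theorem summable_of_add_mul_le {g a : ℕ → ℝ} {c : ℝ} (hc : 0 < c) (hg : ∀ k, 0 ≤ g k)
    (ha : ∀ k, 0 ≤ a k) (h : ∀ k, g (k + 1) + c * a k ≤ g k) : Summable a := by
  refine summable_of_sum_range_le (c := g 0 / c) ha fun n => ?_
  rw [le_div_iff₀' hc, mul_sum]
  have htel := sum_range_sub' g n
  have := sum_le_sum fun i (_ : i ∈ range n) => (le_sub_iff_add_le'.2 (h i))
  linarith [hg n]

section InnerProduct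

variable {E : Type*} [NormedAddCommGroup E] [InnerProductSpace ℝ E]
  {x : ℕ → E} {c : E} {r : ℕ → ℝ} {C : ℝ}

theorem abs_inner_sub_le_of_forall_le (hC : 0 ≤ C) (hr : ∀ i, 0 ≤ r i)
    (hinc : ∀ i l, |⟪x (i + 1) - x i, x l - c⟫| ≤ C * r i * (r i + r l))
    {a b l : ℕ} (hab : a ≤ b) (hl : ∀ i ∈ Ico a b, r l ≤ r i) :
    |⟪x b - x a, x l - c⟫| ≤ 2 * C * ∑ i ∈ Ico a b, r i ^ 2 := by
  rw [← sum_Ico_sub x hab, sum_inner, mul_sum]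
  refine (abs_sum_le_sum_abs _ _).trans (sum_le_sum fun i hi => (hinc i l).trans ?_)
  nlinarith [hl i hi, hr i, hr l, mul_nonneg hC (hr i)]

theorem norm_sub_sq_le_of_forall_le (hC : 0 ≤ C) (hr : ∀ i, 0 ≤ r i)
    (hinc : ∀ i l, |⟪x (i + 1) - x i, x l - c⟫| ≤ C * r i * (r i + r l))
    {k j a l : ℕ} (ha : a ∈ Icc k j) (hl : l ∈ Icc k j) (hmin : ∀ i ∈ Icc k j, r l ≤ r i) :
    ‖x a - x l‖ ^ 2 ≤ ‖x a - c‖ ^ 2 - ‖x l - c‖ ^ 2 + 4 * C * ∑ i ∈ Ico k j, r i ^ 2 := by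
  rw [mem_Icc] at ha hl
  have hsub : ∀ p q, k ≤ p → q ≤ j → ∑ i ∈ Ico p q, r i ^ 2 ≤ ∑ i ∈ Ico k j, r i ^ 2 :=
    fun p q hp hq => sum_le_sum_of_subset_of_nonneg (Ico_subset_Ico hp hq)
      fun i _ _ => sq_nonneg (r i)
  have hinner : |⟪x a - x l, x l - c⟫| ≤ 2 * C * ∑ i ∈ Ico k j, r i ^ 2 := by
    rcases le_total l a with hla | hal
    · refine (abs_inner_sub_le_of_forall_le hC hr hinc hla fun i hi => hmin i ?_).trans ?_
      · simp only [mem_Ico, mem_Icc] at hi ⊢; omega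
      · exact mul_le_mul_of_nonneg_left (hsub l a hl.1 ha.2) (by linarith)
    · rw [← neg_sub, inner_neg_left, abs_neg]
      refine (abs_inner_sub_le_of_forall_le hC hr hinc hal fun i hi => hmin i ?_).trans ?_
      · simp only [mem_Ico, mem_Icc] at hi ⊢; omega
      · exact mul_le_mul_of_nonneg_left (hsub a l ha.1 hl.2) (by linarith)
  have hexpand : ‖x a - c‖ ^ 2 = ‖x a - x l‖ ^ 2 + 2 * ⟪x a - x l, x l - c⟫ + ‖x l - c‖ ^ 2 := by
    rw [← norm_add_sq_real, sub_add_sub_cancel]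
  linarith [neg_abs_le ⟪x a - x l, x l - c⟫]

theorem cauchySeq_of_antitone_of_abs_inner_le (hC : 0 ≤ C) (hr : ∀ i, 0 ≤ r i)
    (hanti : Antitone fun k => ‖x k - c‖ ^ 2) (hsum : Summable fun i => r i ^ 2)
    (hinc : ∀ i l, |⟪x (i + 1) - x i, x l - c⟫| ≤ C * r i * (r i + r l)) :
    CauchySeq x := by
  obtain ⟨g, hg⟩ : ∃ g, Tendsto (fun k => ‖x k - c‖ ^ 2) atTop (𝓝 g) :=
    ⟨_, tendsto_atTop_ciInf hanti ⟨0, by rintro _ ⟨k, rfl⟩; positivity⟩⟩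
  have hS := hsum.hasSum.tendsto_sum_nat
  set S := ∑' i, r i ^ 2
  set β : ℕ → ℝ := fun N => ‖x N - c‖ ^ 2 - g + 4 * C * (S - ∑ i ∈ range N, r i ^ 2)
  have hβ : Tendsto β atTop (𝓝 0) := by
    simpa using (hg.sub_const g).add ((hS.const_sub S).const_mul (4 * C))
  refine cauchySeq_of_le_tendsto_0 (fun N => 2 * √(β N)) (fun m n N hm hn => ?_)
    (by simpa using hβ.sqrt.const_mul 2)
  -- compare `x m` and `x n` with the iterate of smallest `r` between them
  obtain ⟨l, hl, hmin⟩ := exists_min_image (Icc (min m n) (max m n)) r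
    (nonempty_Icc.2 min_le_max)
  have hclose : ∀ a ∈ Icc (min m n) (max m n), ‖x a - x l‖ ≤ √(β N) := by
    intro a ha
    refine Real.le_sqrt_of_sq_le ((norm_sub_sq_le_of_forall_le hC hr hinc ha hl hmin).trans ?_)
    have hNa : ‖x a - c‖ ^ 2 ≤ ‖x N - c‖ ^ 2 :=
      hanti ((le_min hm hn).trans (mem_Icc.1 ha).1)
    have hgl : g ≤ ‖x l - c‖ ^ 2 := hanti.le_of_tendsto hg l
    have htail : ∑ i ∈ Ico (min m n) (max m n), r i ^ 2 ≤ S - ∑ i ∈ range N, r i ^ 2 := by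
      rw [sum_Ico_eq_sub _ min_le_max]
      have hS_le := hsum.sum_le_tsum (range (max m n)) fun i _ => sq_nonneg (r i)
      have hN_le : ∑ i ∈ range N, r i ^ 2 ≤ ∑ i ∈ range (min m n), r i ^ 2 :=
        sum_le_sum_of_subset_of_nonneg (range_subset_range.2 (le_min hm hn))
          fun i _ _ => sq_nonneg (r i)
      linarith
    have := mul_le_mul_of_nonneg_left htail (by linarith : 0 ≤ 4 * C)
    linarith
  calc dist (x m) (x n) ≤ ‖x m - x l‖ + ‖x n - x l‖ := by
        simpa only [dist_eq_norm] using dist_triangle_right (x m) (x n) (x l)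
    _ ≤ 2 * √(β N) := by
        linarith [hclose m (mem_Icc.2 ⟨min_le_left m n, le_max_left m n⟩),
          hclose n (mem_Icc.2 ⟨min_le_right m n, le_max_right m n⟩)]

theorem eq_of_inner_sub_eq_zero_of_norm_le {x y c : E} (h : ⟪x - c, y - x⟫ = 0)
    (hle : ‖y - c‖ ≤ ‖x - c‖) : x = y := by
  have hpyth : ‖y - c‖ ^ 2 = ‖y - x‖ ^ 2 + ‖x - c‖ ^ 2 := by
    rw [← sub_add_sub_cancel y x c, norm_add_sq_real, real_inner_comm, h]; ring
  have hyx : ‖y - x‖ ^ 2 = 0 := le_antisymm (by nlinarith [norm_nonneg (y - c)]) (sq_nonneg _)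
  exact (sub_eq_zero.1 (norm_eq_zero.1 (pow_eq_zero_iff two_ne_zero |>.1 hyx))).symm

end InnerProduct

def TangentialConeCondition {X Y : Type*} [NormedAddCommGroup X] [NormedSpace ℝ X]
    [NormedAddCommGroup Y] [NormedSpace ℝ Y] (P : X → Y) (P' : X → X →L[ℝ] Y) (D : Set X)
    (η : ℝ) : Prop :=
  ∀ x ∈ D, ∀ y ∈ D, ‖P x - P y - P' x (x - y)‖ ≤ η * ‖P x - P y‖

namespace TangentialConeCondition

variable {X Y : Type*} [NormedAddCommGroup X] [NormedSpace ℝ X]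
  [NormedAddCommGroup Y] [NormedSpace ℝ Y] {P : X → Y} {P' : X → X →L[ℝ] Y} {D : Set X}
  {η : ℝ} {x y : X}

theorem norm_apply_sub_le (h : TangentialConeCondition P P' D η) (hx : x ∈ D) (hy : y ∈ D) :
    ‖P' x (x - y)‖ ≤ (1 + η) * ‖P x - P y‖ := by
  linarith [h x hx y hy, norm_sub_norm_le (P' x (x - y)) (P x - P y),
    norm_sub_rev (P' x (x - y)) (P x - P y)]

theorem mul_norm_sub_le (h : TangentialConeCondition P P' D η) (hx : x ∈ D) (hy : y ∈ D) :
    (1 - η) * ‖P x - P y‖ ≤ ‖P' x (x - y)‖ := by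
  linarith [h x hx y hy, norm_sub_norm_le (P x - P y) (P' x (x - y))]

theorem apply_sub_eq_zero (h : TangentialConeCondition P P' D η) (hx : x ∈ D) (hy : y ∈ D)
    (hxy : P x = P y) : P' x (x - y) = 0 := by
  have hcone := h x hx y hy
  rw [hxy, sub_self, norm_zero, mul_zero, zero_sub, norm_neg] at hcone
  exact norm_le_zero_iff.1 hcone

theorem tendsto_apply {Φ : ℕ → X} {L : X} (h : TangentialConeCondition P P' D η)
    (hscale : ∀ x ∈ D, ‖P' x‖ ≤ 1) (hη : η < 1) (hΦ : ∀ k, Φ k ∈ D) (hL : L ∈ D)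
    (hlim : Tendsto Φ atTop (𝓝 L)) : Tendsto (fun k => P (Φ k)) atTop (𝓝 (P L)) := by
  rw [tendsto_iff_norm_sub_tendsto_zero]
  refine squeeze_zero (fun _ => norm_nonneg _) (fun k => ?_)
    (by simpa using (tendsto_iff_norm_sub_tendsto_zero.1 hlim).div_const (1 - η))
  rw [le_div_iff₀' (by linarith)]
  calc (1 - η) * ‖P (Φ k) - P L‖ ≤ ‖P' (Φ k) (Φ k - L)‖ := h.mul_norm_sub_le (hΦ k) hL
    _ ≤ ‖Φ k - L‖ := (le_opNorm _ _).trans (mul_le_of_le_one_left (norm_nonneg _) (hscale _ (hΦ k)))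

end TangentialConeCondition

section Landweber

variable {X Y : Type*} [NormedAddCommGroup X] [InnerProductSpace ℝ X] [CompleteSpace X]
  [NormedAddCommGroup Y] [InnerProductSpace ℝ Y] [CompleteSpace Y]

theorem norm_add_adjoint_apply_sq_add_le {A : X →L[ℝ] Y} (hA : ‖A‖ ≤ 1) {e : X} {u : Y}
    {η : ℝ} (h : ‖u + A e‖ ≤ η * ‖u‖) :
    ‖e + adjoint A u‖ ^ 2 + (1 - 2 * η) * ‖u‖ ^ 2 ≤ ‖e‖ ^ 2 := by
  have hadj : ‖adjoint A u‖ ≤ ‖u‖ :=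
    (le_opNorm _ _).trans (mul_le_of_le_one_left (norm_nonneg _) (by simpa using hA))
  have hinner : ⟪e, adjoint A u⟫ = ⟪u + A e, u⟫ - ‖u‖ ^ 2 := by
    rw [adjoint_inner_right, inner_add_left, real_inner_self_eq_norm_sq]; ring
  have hcs : ⟪u + A e, u⟫ ≤ η * ‖u‖ ^ 2 :=
    (real_inner_le_norm _ _).trans (by nlinarith [norm_nonneg u])
  rw [norm_add_sq_real, hinner]
  nlinarith [norm_nonneg (adjoint A u)]

variable {P : X → Y} {P' : X → X →L[ℝ] Y} {s : Y} {Φ : ℕ → X}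

theorem landweber_sub_mem_orthogonal {K : Submodule ℝ X}
    (hK : ∀ k, K ≤ LinearMap.ker (P' (Φ k) : X →ₗ[ℝ] Y))
    (hiter : ∀ k, Φ (k + 1) = Φ k + adjoint (P' (Φ k)) (s - P (Φ k))) (k : ℕ) :
    Φ k - Φ 0 ∈ Kᗮ := by
  induction k with
  | zero => simp
  | succ k ih =>
    rw [hiter, add_sub_right_comm]
    refine add_mem ih fun v hv => ?_
    rw [adjoint_inner_right, show P' (Φ k) v = 0 from hK k hv, inner_zero_left]

namespace TangentialConeCondition

variable {D : Set X} {η : ℝ} {Φdag : X}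

theorem landweber_sq_le (h : TangentialConeCondition P P' D η) (hscale : ∀ x ∈ D, ‖P' x‖ ≤ 1)
    (hdag : Φdag ∈ D) (hsol : P Φdag = s)
    (hiter : ∀ k, Φ (k + 1) = Φ k + adjoint (P' (Φ k)) (s - P (Φ k))) {k : ℕ} (hk : Φ k ∈ D) :
    ‖Φ (k + 1) - Φdag‖ ^ 2 + (1 - 2 * η) * ‖s - P (Φ k)‖ ^ 2 ≤ ‖Φ k - Φdag‖ ^ 2 := by
  rw [hiter, add_sub_right_comm]
  refine norm_add_adjoint_apply_sq_add_le (hscale _ hk) ?_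
  calc ‖s - P (Φ k) + P' (Φ k) (Φ k - Φdag)‖
      = ‖P (Φ k) - P Φdag - P' (Φ k) (Φ k - Φdag)‖ := by rw [← norm_neg, hsol]; congr 1; abel
    _ ≤ η * ‖P (Φ k) - P Φdag‖ := h _ hk _ hdag
    _ = η * ‖s - P (Φ k)‖ := by rw [hsol, norm_sub_rev]

theorem abs_inner_landweber_le (h : TangentialConeCondition P P' D η) (hη : η < 1 / 2)
    (hdag : Φdag ∈ D) (hsol : P Φdag = s)
    (hiter : ∀ k, Φ (k + 1) = Φ k + adjoint (P' (Φ k)) (s - P (Φ k))) {i l : ℕ}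
    (hi : Φ i ∈ D) (hl : Φ l ∈ D) :
    |⟪Φ (i + 1) - Φ i, Φ l - Φdag⟫|
      ≤ 3 * ‖s - P (Φ i)‖ * (‖s - P (Φ i)‖ + ‖s - P (Φ l)‖) := by
  rw [hiter, add_sub_cancel_left, adjoint_inner_left]
  have hdag_le : ‖P' (Φ i) (Φ i - Φdag)‖ ≤ 3 / 2 * ‖s - P (Φ i)‖ := by
    refine (h.norm_apply_sub_le hi hdag).trans ?_
    rw [hsol, norm_sub_rev]
    exact mul_le_mul_of_nonneg_right (by linarith) (norm_nonneg _)
  have hl_le : ‖P' (Φ i) (Φ i - Φ l)‖ ≤ 3 / 2 * (‖s - P (Φ i)‖ + ‖s - P (Φ l)‖) := by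
    refine (h.norm_apply_sub_le hi hl).trans ?_
    have := norm_sub_le_norm_sub_add_norm_sub (P (Φ i)) s (P (Φ l))
    rw [norm_sub_rev (P (Φ i)) s] at this
    nlinarith [norm_nonneg (P (Φ i) - P (Φ l))]
  have hsplit : ‖P' (Φ i) (Φ l - Φdag)‖
      ≤ ‖P' (Φ i) (Φ i - Φdag)‖ + ‖P' (Φ i) (Φ i - Φ l)‖ := by
    rw [← sub_sub_sub_cancel_left Φdag (Φ l) (Φ i), map_sub]
    exact norm_sub_le _ _
  calc |⟪s - P (Φ i), P' (Φ i) (Φ l - Φdag)⟫|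
      ≤ ‖s - P (Φ i)‖ * ‖P' (Φ i) (Φ l - Φdag)‖ := abs_real_inner_le_norm _ _
    _ ≤ 3 * ‖s - P (Φ i)‖ * (‖s - P (Φ i)‖ + ‖s - P (Φ l)‖) := by
      nlinarith [norm_nonneg (s - P (Φ i)), norm_nonneg (s - P (Φ l))]

theorem landweber_mem_closedBall {ρ : ℝ} (h : TangentialConeCondition P P' D η)
    (hscale : ∀ x ∈ D, ‖P' x‖ ≤ 1) (hη : η < 1 / 2) (hD : closedBall Φdag ρ ⊆ D)
    (hsol : P Φdag = s) (h0 : Φ 0 ∈ closedBall Φdag ρ)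
    (hiter : ∀ k, Φ (k + 1) = Φ k + adjoint (P' (Φ k)) (s - P (Φ k))) (k : ℕ) :
    Φ k ∈ closedBall Φdag ρ := by
  have hdag : Φdag ∈ D := hD (mem_closedBall_self (dist_nonneg.trans h0))
  induction k with
  | zero => exact h0
  | succ k ih =>
    have hstep := h.landweber_sq_le hscale hdag hsol hiter (hD ih)
    rw [mem_closedBall_iff_norm] at ih ⊢
    refine (le_of_pow_le_pow_left₀ two_ne_zero (norm_nonneg _) ?_).trans ih
    nlinarith [sq_nonneg ‖s - P (Φ k)‖]

theorem exists_tendsto_landweber {ρ : ℝ} (h : TangentialConeCondition P P' D η)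
    (hscale : ∀ x ∈ D, ‖P' x‖ ≤ 1) (hη : η < 1 / 2) (hD : closedBall Φdag ρ ⊆ D)
    (hsol : P Φdag = s) (h0 : Φ 0 ∈ closedBall Φdag ρ)
    (hiter : ∀ k, Φ (k + 1) = Φ k + adjoint (P' (Φ k)) (s - P (Φ k))) :
    ∃ L ∈ closedBall Φdag ρ, P L = s ∧ Tendsto Φ atTop (𝓝 L) := by
  have hdag : Φdag ∈ D := hD (mem_closedBall_self (dist_nonneg.trans h0))
  have hΦ : ∀ k, Φ k ∈ D := fun k => hD (h.landweber_mem_closedBall hscale hη hD hsol h0 hiter k)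
  have hstep := fun k => h.landweber_sq_le hscale hdag hsol hiter (hΦ k)
  have hsum : Summable fun k => ‖s - P (Φ k)‖ ^ 2 :=
    summable_of_add_mul_le (g := fun k => ‖Φ k - Φdag‖ ^ 2) (by linarith) (fun _ => sq_nonneg _)
      (fun _ => sq_nonneg _) hstep
  have hanti : Antitone fun k => ‖Φ k - Φdag‖ ^ 2 := antitone_nat_of_succ_le fun k => by
    nlinarith [hstep k, sq_nonneg ‖s - P (Φ k)‖]
  obtain ⟨L, hL⟩ := cauchySeq_tendsto_of_complete <|
    cauchySeq_of_antitone_of_abs_inner_le (C := 3) (by norm_num) (fun _ => norm_nonneg _) hanti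
      hsum fun i l => h.abs_inner_landweber_le hη hdag hsol hiter (hΦ i) (hΦ l)
  have hLball : L ∈ closedBall Φdag ρ := isClosed_closedBall.mem_of_tendsto hL
    (Eventually.of_forall (h.landweber_mem_closedBall hscale hη hD hsol h0 hiter))
  have hres : Tendsto (fun k => P (Φ k)) atTop (𝓝 s) := by
    rw [tendsto_iff_norm_sub_tendsto_zero]
    simpa [norm_sub_rev] using hsum.tendsto_atTop_zero.sqrt
  refine ⟨L, hLball, tendsto_nhds_unique ?_ hres, hL⟩
  exact h.tendsto_apply hscale (by linarith) hΦ (hD hLball) hL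

end TangentialConeCondition

end Landweber

theorem stmt_15_general {X Y : Type*} [NormedAddCommGroup X] [InnerProductSpace ℝ X] [CompleteSpace X]
    [NormedAddCommGroup Y] [InnerProductSpace ℝ Y] [CompleteSpace Y]
    (P : X → Y) (P' : X → X →L[ℝ] Y) (Φ₀ : X) (ρ η : ℝ)
    (hη : η < 1 / 2)
    (hscale : ∀ Φ, ‖Φ - Φ₀‖ ≤ 2 * ρ → ‖P' Φ‖ ≤ 1)
    (hcone : ∀ Φ Φ', ‖Φ - Φ₀‖ ≤ 2 * ρ → ‖Φ' - Φ₀‖ ≤ 2 * ρ →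
      ‖P Φ - P Φ' - P' Φ (Φ - Φ')‖ ≤ η * ‖P Φ - P Φ'‖)
    (s : Y) (Φdag : X) (hdag : ‖Φdag - Φ₀‖ ≤ ρ) (hsol : P Φdag = s)
    (hmin : ∀ Φ, ‖Φ - Φ₀‖ ≤ 2 * ρ → P Φ = s → ‖Φdag - Φ₀‖ ≤ ‖Φ - Φ₀‖)
    (hker : ∀ Φ, ‖Φ - Φdag‖ ≤ ρ → LinearMap.ker (P' Φdag : X →ₗ[ℝ] Y) ≤ LinearMap.ker (P' Φ : X →ₗ[ℝ] Y))
    (Φ : ℕ → X) (hΦ0 : Φ 0 = Φ₀)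
    (hiter : ∀ k, Φ (k + 1) = Φ k + ContinuousLinearMap.adjoint (P' (Φ k)) (s - P (Φ k))) :
    Filter.Tendsto Φ Filter.atTop (nhds Φdag) := by
  have hB : TangentialConeCondition P P' (closedBall Φ₀ (2 * ρ)) η := fun x hx y hy =>
    hcone x y (mem_closedBall_iff_norm.1 hx) (mem_closedBall_iff_norm.1 hy)
  have hscaleB : ∀ x ∈ closedBall Φ₀ (2 * ρ), ‖P' x‖ ≤ 1 := fun x hx =>
    hscale x (mem_closedBall_iff_norm.1 hx)
  have hball : closedBall Φdag ρ ⊆ closedBall Φ₀ (2 * ρ) :=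
    closedBall_subset_closedBall' (by rw [dist_eq_norm]; linarith [norm_nonneg (Φdag - Φ₀)])
  have h0 : Φ 0 ∈ closedBall Φdag ρ := by rwa [hΦ0, mem_closedBall_iff_norm']
  obtain ⟨L, hL, hPL, hlim⟩ := hB.exists_tendsto_landweber hscaleB hη hball hsol h0 hiter
  have horth : L - Φ₀ ∈ (LinearMap.ker (P' Φdag : X →ₗ[ℝ] Y))ᗮ :=
    (Submodule.isClosed_orthogonal _).mem_of_tendsto (hlim.sub_const Φ₀) <| .of_forall fun k =>
      hΦ0 ▸ landweber_sub_mem_orthogonal (fun k => hker _ <| mem_closedBall_iff_norm.1 <|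
        hB.landweber_mem_closedBall hscaleB hη hball hsol h0 hiter k) hiter k
  have hkerL : Φdag - L ∈ LinearMap.ker (P' Φdag : X →ₗ[ℝ] Y) :=
    hB.apply_sub_eq_zero (hball (mem_closedBall_self (dist_nonneg.trans h0))) (hball hL)
      (hsol.trans hPL.symm)
  have hLmin := hmin L (mem_closedBall_iff_norm.1 (hball hL)) hPL
  rwa [← eq_of_inner_sub_eq_zero_of_norm_le
    (Submodule.inner_left_of_mem_orthogonal hkerL horth) hLmin]

/-- Convergence of the exact-data non-linear Landweber iteration to the
`Φ₀`-minimum-norm solution `Φ†` under the additional null-space nesting condition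
`ker P'(Φ†) ⊆ ker P'(Φ)` for all `Φ` with `‖Φ − Φ†‖ ≤ ρ`. -/
theorem stmt_15 {X Y : Type*} [NormedAddCommGroup X] [InnerProductSpace ℝ X] [CompleteSpace X]
    [NormedAddCommGroup Y] [InnerProductSpace ℝ Y] [CompleteSpace Y]
    (P : X → Y) (P' : X → X →L[ℝ] Y) (Φ₀ : X) (ρ η : ℝ)
    (hρ : 0 < ρ) (hη0 : 0 ≤ η) (hη : η < 1 / 2)
    (hdiff : ∀ Φ, ‖Φ - Φ₀‖ ≤ 2 * ρ → HasFDerivAt P (P' Φ) Φ)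
    (hscale : ∀ Φ, ‖Φ - Φ₀‖ ≤ 2 * ρ → ‖P' Φ‖ ≤ 1)
    (hcone : ∀ Φ Φ', ‖Φ - Φ₀‖ ≤ 2 * ρ → ‖Φ' - Φ₀‖ ≤ 2 * ρ →
      ‖P Φ - P Φ' - P' Φ (Φ - Φ')‖ ≤ η * ‖P Φ - P Φ'‖)
    (s : Y) (Φdag : X) (hdag : ‖Φdag - Φ₀‖ ≤ ρ) (hsol : P Φdag = s)
    (hmin : ∀ Φ, ‖Φ - Φ₀‖ ≤ 2 * ρ → P Φ = s → ‖Φdag - Φ₀‖ ≤ ‖Φ - Φ₀‖)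
    (hker : ∀ Φ, ‖Φ - Φdag‖ ≤ ρ → LinearMap.ker (P' Φdag : X →ₗ[ℝ] Y) ≤ LinearMap.ker (P' Φ : X →ₗ[ℝ] Y))
    (Φ : ℕ → X) (hΦ0 : Φ 0 = Φ₀)
    (hiter : ∀ k, Φ (k + 1) = Φ k + ContinuousLinearMap.adjoint (P' (Φ k)) (s - P (Φ k))) :
    Filter.Tendsto Φ Filter.atTop (nhds Φdag) :=
  stmt_15_general P P' Φ₀ ρ η hη hscale hcone s Φdag hdag hsol hmin hker Φ hΦ0 hiter
end
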